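/- arXiv:2109.09051 — 7 statements merged into one kernel-verified Lean document; each statement's English description precedes it below -/
import Mathlib

section
/- Let p be a prime, δ a power of p, and e a positive integer with e ≤ δ - 1. Then for every integer s with e ≤ s ≤ δ - 1, the binomial coefficient C(δ - 1 + e, s) is divisible by p. -/
lemma digits_le_aux (p : ℕ) (hp : 1 < p) :
    ∀ s m : ℕ, (∀ i, s / p ^ i % p ≤ m / p ^ i % p) → s ≤ m := by
  intro s
  induction s using Nat.strong_induction_on with
  | _ s ih =>
    intro m h
    rcases Nat.eq_zero_or_pos s with hs | hs
    · omega
    · have hdiv : s / p < s := Nat.div_lt_self hs hp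
      have h' : ∀ i, (s / p) / p ^ i % p ≤ (m / p) / p ^ i % p := by
        intro i
        have e1 : s / p / p ^ i = s / p ^ (i + 1) := by
          rw [Nat.div_div_eq_div_mul, pow_succ, mul_comm]
        have e2 : m / p / p ^ i = m / p ^ (i + 1) := by
          rw [Nat.div_div_eq_div_mul, pow_succ, mul_comm]
        rw [e1, e2]; exact h (i + 1)
      have h1 : s / p ≤ m / p := ih _ hdiv _ h'
      have h0 : s % p ≤ m % p := by simpa using h 0
      have := Nat.div_add_mod s p
      have := Nat.div_add_mod m p
      nlinarith

theorem stmt_0 (p r δ e s : ℕ) (hp : p.Prime) (hr : 0 < r) (hδ : δ = p ^ r)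
    (he1 : 1 ≤ e) (he2 : e ≤ δ - 1) (hs1 : e ≤ s) (hs2 : s ≤ δ - 1) :
    p ∣ Nat.choose (δ - 1 + e) s := by
  subst hδ
  haveI : Fact p.Prime := ⟨hp⟩
  have hp1 : 1 < p := hp.one_lt
  have hδpos : 0 < p ^ r := pow_pos hp.pos r
  have hδ1 : 1 < p ^ r := Nat.one_lt_pow hr.ne' hp1
  set n := p ^ r - 1 + e with hn
  have hm : n = p ^ r + (e - 1) := by omega
  have hmlt : e - 1 < p ^ r := by omega
  have hslt : s < p ^ r := by omega
  -- there is a digit of s exceeding the corresponding digit of e-1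
  have hex : ¬ ∀ i, s / p ^ i % p ≤ (e - 1) / p ^ i % p := by
    intro h
    have := digits_le_aux p hp1 s (e - 1) h
    omega
  push_neg at hex
  obtain ⟨i, hi⟩ := hex
  have hir : i < r := by
    by_contra h
    push_neg at h
    have : s / p ^ i = 0 :=
      Nat.div_eq_of_lt (lt_of_lt_of_le hslt (Nat.pow_le_pow_right hp.pos h))
    rw [this] at hi
    simp at hi
  -- Lucas
  have hn2 : n < p ^ (r + 1) := by
    have : p ^ (r + 1) = p * p ^ r := by ring
    nlinarith
  have hs2' : s < p ^ (r + 1) := lt_of_lt_of_le hslt (Nat.pow_le_pow_right hp.pos (by omega))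
  have hlucas := Choose.lucas_theorem_nat (p := p) (n := n) (k := s) hn2 hs2'
  -- the product is zero
  have hdigit : n / p ^ i % p = (e - 1) / p ^ i % p := by
    have hsplit : n = p ^ i * (p * p ^ (r - i - 1)) + (e - 1) := by
      rw [hm]
      congr 1
      rw [← pow_succ', ← pow_add]
      congr 1
      omega
    rw [hsplit, Nat.mul_add_div (pow_pos hp.pos i), Nat.mul_add_mod]
  have hzero : ∏ j ∈ Finset.range (r + 1),
      Nat.choose (n / p ^ j % p) (s / p ^ j % p) = 0 := by
    apply Finset.prod_eq_zero (i := i) (Finset.mem_range.mpr (by omega))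
    rw [hdigit]
    exact Nat.choose_eq_zero_of_lt hi
  rw [hzero] at hlucas
  exact (Nat.modEq_zero_iff_dvd).mp hlucas
end

section
/- Let p be a prime, δ a power of p, q = δ^m with m ≥ 2, and u₀ ∈ U_{q+1} with u₀ ≠ 1 and u₀ ≠ -1. For c ∈ GF(δ) ⊆ GF(q), let u_c = (c + u₀^q)/(c + u₀) and a_c = (c + u₀)^{(q+1)(δ-1)}, and set u_∞ = 1, a_∞ = 1. Then for every integer e with 1 ≤ e ≤ δ - 1, Σ_{c ∈ GF(δ) ∪ {∞}} a_c · u_c^e = 0. -/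
/-!
On `GF(δ) = {c | c ^ δ = c}` the Frobenius `x ↦ x ^ q` fixes `c`, so `(c + u₀) ^ (q + 1) =
(c + u₀ ^ q) (c + u₀)`, and `(c + u₀ ^ q) ^ δ = c + u₀ ^ (q δ)`. Hence the summand indexed by `c`
is the value at `c` of the monic polynomial
`(X + u₀ ^ (q δ)) (X + u₀ ^ q) ^ (e - 1) (X + u₀) ^ (δ - 1 - e)` of degree `δ - 1`; the division
is harmless because `u₀ ∉ GF(q)`. Summing a monic polynomial of degree `δ - 1` over `GF(δ)`
gives `-1`, since the power sums `∑ c ^ i` vanish for `i < δ - 1` and equal `-1` for `i = δ - 1`.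
-/

open Finset Polynomial

lemma pow_pow_eq_self_of_pow_eq_self {M : Type*} [Monoid M] {x : M} {n : ℕ} (h : x ^ n = x)
    (m : ℕ) : x ^ n ^ m = x := by
  induction m with
  | zero => simp
  | succ m ih => rw [pow_succ, pow_mul, ih, h]

lemma pow_ne_self_of_pow_succ_eq_one {R : Type*} [Ring R] [NoZeroDivisors R] {u : R} {q : ℕ}
    (hu : u ^ (q + 1) = 1) (hu1 : u ≠ 1) (hu2 : u ≠ -1) : u ^ q ≠ u := by
  intro h
  rw [pow_succ, h] at hu
  exact (mul_self_eq_one_iff.mp hu).elim hu1 hu2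

lemma add_ne_zero_of_pow_expChar_pow_eq_self {R : Type*} [CommRing R] {p k : ℕ} [ExpChar R p]
    {c u : R} (hc : c ^ p ^ k = c) (hu : u ^ p ^ k ≠ u) : c + u ≠ 0 := by
  intro h
  rw [eq_neg_of_add_eq_zero_right h, neg_pow, neg_one_pow_expChar_pow, hc, neg_one_mul] at hu
  exact hu rfl

lemma pow_mul_div_pow_eq {K : Type*} [Field K] {A B : K} {q n e : ℕ} (hA : A ≠ 0)
    (hAB : A ^ q = B) (he : 1 ≤ e) (hen : e ≤ n) :
    A ^ ((q + 1) * n) * (B / A) ^ e = B ^ (n + 1) * B ^ (e - 1) * A ^ (n - e) := by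
  obtain ⟨k, rfl⟩ := Nat.exists_eq_add_of_le hen
  obtain ⟨j, rfl⟩ := Nat.exists_eq_add_of_le' he
  rw [pow_mul, pow_succ, hAB, Nat.add_sub_cancel, Nat.add_sub_cancel_left, div_pow,
    mul_div_assoc', div_eq_iff (pow_ne_zero _ hA)]
  ring

lemma FiniteField.exists_isPrimitiveRoot_of_dvd {K : Type*} [Field K] [Fintype K] {n : ℕ}
    (hn : n ∣ Fintype.card K - 1) : ∃ ζ : K, IsPrimitiveRoot ζ n := by
  classical
  obtain ⟨g, hg⟩ := IsCyclic.exists_ofOrder_eq_natCard (α := Kˣ)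
  rw [Nat.card_eq_fintype_card, Fintype.card_units] at hg
  have hg' : IsPrimitiveRoot (g : K) (Fintype.card K - 1) :=
    IsPrimitiveRoot.coe_units_iff.mpr (hg ▸ IsPrimitiveRoot.orderOf g)
  obtain ⟨d, hd⟩ := hn
  have hpos : 0 < Fintype.card K - 1 := Nat.sub_pos_of_lt Fintype.one_lt_card
  exact ⟨_, hg'.pow hpos (hd.trans (mul_comm n d))⟩

theorem IsPrimitiveRoot.sum_nthRootsFinset_pow_eq_zero {R : Type*} [CommRing R] [IsDomain R]
    {ζ : R} {n i : ℕ} (hζ : IsPrimitiveRoot ζ n) (hi : ¬ n ∣ i) :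
    ∑ x ∈ nthRootsFinset n (1 : R), x ^ i = 0 := by
  obtain rfl | hn := n.eq_zero_or_pos
  · simp
  have hmem : ∀ {x y : R}, x ∈ nthRootsFinset n (1 : R) → y ∈ nthRootsFinset n (1 : R) →
      x * y ∈ nthRootsFinset n (1 : R) := fun hx hy => by
    simpa using mul_mem_nthRootsFinset hx hy
  have hζmem := hζ.mem_nthRootsFinset hn
  have hζinv : ζ ^ (n - 1) * ζ = 1 := by rw [← pow_succ, Nat.sub_add_cancel hn, hζ.pow_eq_one]
  have hζinvmem : ζ ^ (n - 1) ∈ nthRootsFinset n (1 : R) := by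
    rw [Polynomial.mem_nthRootsFinset hn, ← pow_mul, mul_comm, pow_mul, hζ.pow_eq_one, one_pow]
  -- multiplication by `ζ` permutes the `n`-th roots of unity
  have hrot : ζ ^ i * ∑ x ∈ nthRootsFinset n (1 : R), x ^ i =
      ∑ x ∈ nthRootsFinset n (1 : R), x ^ i := by
    rw [mul_sum]
    refine sum_nbij' (ζ * ·) (ζ ^ (n - 1) * ·) (fun x hx => hmem hζmem hx)
      (fun x hx => hmem hζinvmem hx) (fun x _ => by rw [← mul_assoc, hζinv, one_mul])
      (fun x _ => by rw [← mul_assoc, mul_comm ζ, hζinv, one_mul]) (fun x _ => (mul_pow ζ x i).symm)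
  by_contra hsum
  exact hi ((hζ.pow_eq_one_iff_dvd i).mp ((mul_eq_right₀ hsum).mp hrot))

lemma filter_pow_eq_self_eq_insert_nthRootsFinset {K : Type*} [Field K] [Fintype K]
    [DecidableEq K] {δ : ℕ} (hδ : 1 < δ) :
    univ.filter (fun x : K => x ^ δ = x) = insert 0 (nthRootsFinset (δ - 1) (1 : K)) := by
  ext x
  rw [mem_filter, mem_insert, mem_nthRootsFinset (by omega), ← Nat.sub_add_cancel hδ.le,
    pow_succ, Nat.add_sub_cancel]
  by_cases hx : x = 0
  · simp [hx]
  · simp [hx, mul_eq_right₀ hx]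

lemma sum_pow_filter_pow_eq_self {K : Type*} [Field K] [Fintype K] [DecidableEq K] {δ i : ℕ}
    {ζ : K} (hζ : IsPrimitiveRoot ζ (δ - 1)) (hδ : 1 < δ) (hδK : (δ : K) = 0) (hi : i ≤ δ - 1) :
    ∑ x ∈ univ.filter (fun x : K => x ^ δ = x), x ^ i = if i = δ - 1 then -1 else 0 := by
  have hcast : ((δ - 1 : ℕ) : K) = -1 := by
    rw [Nat.cast_sub hδ.le, hδK, Nat.cast_one, zero_sub]
  have hsum_one : ∀ j, (δ - 1) ∣ j → ∑ x ∈ nthRootsFinset (δ - 1) (1 : K), x ^ j = -1 := by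
    rintro _ ⟨k, rfl⟩
    rw [sum_congr rfl fun x hx => by
        rw [pow_mul, (Polynomial.mem_nthRootsFinset (by omega) 1).mp hx, one_pow],
      sum_const, hζ.card_nthRootsFinset, nsmul_one, hcast]
  rw [filter_pow_eq_self_eq_insert_nthRootsFinset hδ,
    sum_insert fun h => ne_zero_of_mem_nthRootsFinset one_ne_zero h rfl]
  rcases Nat.eq_zero_or_pos i with rfl | hi0
  · rw [if_neg (by omega), pow_zero, hsum_one 0 (dvd_zero _), add_neg_cancel]
  rcases hi.eq_or_lt with rfl | hlt
  · rw [if_pos rfl, zero_pow hi0.ne', hsum_one _ dvd_rfl, zero_add]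
  · rw [if_neg hlt.ne, zero_pow hi0.ne', zero_add,
      hζ.sum_nthRootsFinset_pow_eq_zero fun h => (Nat.le_of_dvd hi0 h).not_gt hlt]

lemma sum_eval_eq_neg_one_of_monic {R : Type*} [CommRing R] {s : Finset R} {n : ℕ}
    (hs : ∀ i ≤ n, ∑ x ∈ s, x ^ i = if i = n then -1 else 0) {f : R[X]} (hf : f.Monic)
    (hdeg : f.natDegree = n) : ∑ x ∈ s, f.eval x = -1 := by
  simp_rw [eval_eq_sum_range, hdeg]
  rw [sum_comm]
  simp_rw [← mul_sum]
  rw [sum_congr rfl fun i hi => by rw [hs i (Nat.lt_succ_iff.mp (mem_range.mp hi))]]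
  simp [← hdeg, hf.coeff_natDegree]

theorem stmt_5_general (p r m : ℕ) (hp : p.Prime)
    (δ q : ℕ) (hδ : δ = p ^ r) (hq : q = δ ^ m)
    (K : Type*) [Field K] [Fintype K] [DecidableEq K] (hK : Fintype.card K = q ^ 2)
    (u₀ : K) (hu₀ : u₀ ^ (q + 1) = 1) (hu₀1 : u₀ ≠ 1) (hu₀2 : u₀ ≠ -1)
    (e : ℕ) (he1 : 1 ≤ e) (he2 : e ≤ δ - 1) :
    (∑ c ∈ Finset.univ.filter (fun x : K => x ^ δ = x),
        (c + u₀) ^ ((q + 1) * (δ - 1)) * ((c + u₀ ^ q) / (c + u₀)) ^ e) + 1 = 0 := by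
  have hδ1 : 1 < δ := by omega
  have hr : r ≠ 0 := by rintro rfl; simp [hδ] at hδ1
  have : Fact p.Prime := ⟨hp⟩
  have : CharP K p := charP_of_card_eq_prime_pow (f := r * m * 2) <| by
    rw [hK, hq, hδ, ← pow_mul, ← pow_mul, mul_assoc]
  have hδK : (δ : K) = 0 := by simp [hδ, hr]
  obtain ⟨ζ, hζ⟩ := FiniteField.exists_isPrimitiveRoot_of_dvd (K := K) (n := δ - 1) <| by
    simpa [hK, hq, ← pow_mul] using Nat.sub_dvd_pow_sub_pow δ 1 (m * 2)
  have hqp : q = p ^ (r * m) := by rw [hq, hδ, pow_mul]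
  set f : K[X] := (X + C ((u₀ ^ q) ^ δ)) * (X + C (u₀ ^ q)) ^ (e - 1) * (X + C u₀) ^ (δ - 1 - e)
  have hf : f.Monic := by simp only [f]; monicity!
  have hdeg : f.natDegree = δ - 1 := by simp only [f]; compute_degree! <;> omega
  have hterm : ∀ c ∈ univ.filter (fun x : K => x ^ δ = x),
      (c + u₀) ^ ((q + 1) * (δ - 1)) * ((c + u₀ ^ q) / (c + u₀)) ^ e = f.eval c := by
    intro c hc
    replace hc : c ^ p ^ r = c := hδ ▸ (mem_filter.mp hc).2
    have hcq : c ^ p ^ (r * m) = c := by rw [pow_mul]; exact pow_pow_eq_self_of_pow_eq_self hc m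
    have hA : c + u₀ ≠ 0 := add_ne_zero_of_pow_expChar_pow_eq_self hcq
      (hqp ▸ pow_ne_self_of_pow_succ_eq_one hu₀ hu₀1 hu₀2)
    have hAq : (c + u₀) ^ q = c + u₀ ^ q := by rw [hqp, add_pow_expChar_pow, hcq]
    have hBδ : (c + u₀ ^ q) ^ δ = c + (u₀ ^ q) ^ δ := by rw [hδ, add_pow_expChar_pow, hc]
    rw [pow_mul_div_pow_eq hA hAq he1 he2, Nat.sub_add_cancel hδ1.le, hBδ]
    simp [f]
  rw [sum_congr rfl hterm, sum_eval_eq_neg_one_of_monic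
    (fun i hi => sum_pow_filter_pow_eq_self hζ hδ1 hδK hi) hf hdeg, neg_add_cancel]

theorem stmt_5 (p r m : ℕ) (hp : p.Prime) (hr : 0 < r) (hm : 2 ≤ m)
    (δ q : ℕ) (hδ : δ = p ^ r) (hq : q = δ ^ m)
    (K : Type*) [Field K] [Fintype K] [DecidableEq K] (hK : Fintype.card K = q ^ 2)
    (u₀ : K) (hu₀ : u₀ ^ (q + 1) = 1) (hu₀1 : u₀ ≠ 1) (hu₀2 : u₀ ≠ -1)
    (e : ℕ) (he1 : 1 ≤ e) (he2 : e ≤ δ - 1) :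
    (∑ c ∈ Finset.univ.filter (fun x : K => x ^ δ = x),
        (c + u₀) ^ ((q + 1) * (δ - 1)) * ((c + u₀ ^ q) / (c + u₀)) ^ e) + 1 = 0 :=
  stmt_5_general p r m hp δ q hδ hq K hK u₀ hu₀ hu₀1 hu₀2 e he1 he2
end

section
/- Let F be a field, u₁, ..., uₙ ∈ F, and 0 ≤ ℓ ≤ n. The determinant of the n×n matrix whose rows are (u₁^j, ..., uₙ^j) for j ∈ {0, 1, ..., n} \ {ℓ} equals (∏_{1 ≤ j < i ≤ n} (u_i - u_j)) · σ_{n-ℓ}(u₁, ..., uₙ), where σ_k denotes the k-th elementary symmetric polynomial. -/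
open Polynomial Matrix Finset

theorem stmt_6 (F : Type*) [Field F] (n ℓ : ℕ) (hℓ : ℓ ≤ n) (u : Fin n → F) :
    Matrix.det (Matrix.of fun i j : Fin n =>
        u j ^ (if (i : ℕ) < ℓ then (i : ℕ) else (i : ℕ) + 1)) =
      (∏ i : Fin n, ∏ j ∈ Finset.univ.filter (fun j => j < i), (u i - u j)) *
        ∑ S ∈ Finset.univ.powersetCard (n - ℓ), ∏ i ∈ S, u i := by
  set V : F := ∏ i : Fin n, ∏ j ∈ Finset.univ.filter (fun j => j < i), (u i - u j) with hV
  set σ : F := ∑ S ∈ Finset.univ.powersetCard (n - ℓ), ∏ i ∈ S, u i with hσ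
  set w : Fin (n + 1) → F[X] := Fin.cons X (fun i => C (u i)) with hw
  set d : Fin (n + 1) → F := fun j =>
    Matrix.det (Matrix.of fun i' j' : Fin n => u i' ^ (j.succAbove j' : ℕ)) with hd
  set ℓ' : Fin (n + 1) := ⟨ℓ, Nat.lt_succ_of_le hℓ⟩ with hℓ'
  -- step 1 : Laplace expansion along row 0
  have h1 : Matrix.det (Matrix.vandermonde w) =
      ∑ j : Fin (n + 1), C ((-1) ^ (j : ℕ) * d j) * X ^ (j : ℕ) := by
    rw [Matrix.det_succ_row_zero]
    refine Finset.sum_congr rfl fun j _ => ?_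
    have hm : ((Matrix.vandermonde w).submatrix Fin.succ j.succAbove).det = C (d j) := by
      have : (Matrix.vandermonde w).submatrix Fin.succ j.succAbove =
          (C : F →+* F[X]).mapMatrix (Matrix.of fun i' j' : Fin n => u i' ^ (j.succAbove j' : ℕ)) := by
        ext i' j'
        simp [Matrix.vandermonde, hw, Matrix.submatrix_apply]
      rw [this, ← RingHom.map_det]
    have hv : Matrix.vandermonde w 0 j = X ^ (j : ℕ) := by
      simp [Matrix.vandermonde, hw]
    rw [hm, hv]
    simp only [_root_.map_mul, map_pow, map_neg, Polynomial.C_1]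
    ring
  -- step 2 : Vandermonde determinant as a product
  have h2 : Matrix.det (Matrix.vandermonde w) =
      C ((-1) ^ n * V) * ∏ i : Fin n, (X - C (u i)) := by
    rw [Matrix.det_vandermonde, Fin.prod_univ_succ]
    have e0 : (∏ j ∈ Finset.Ioi (0 : Fin (n+1)), (w j - w 0)) =
        (-1 : F[X]) ^ n * ∏ j : Fin n, (X - C (u j)) := by
      rw [Fin.prod_Ioi_zero]
      simp only [hw, Fin.cons_succ, Fin.cons_zero]
      calc (∏ j : Fin n, (C (u j) - X)) = ∏ j : Fin n, (-1) * (X - C (u j)) := by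
            refine Finset.prod_congr rfl fun j _ => by ring
        _ = (-1 : F[X]) ^ n * ∏ j : Fin n, (X - C (u j)) := by
            rw [Finset.prod_mul_distrib, Finset.prod_const, Finset.card_univ, Fintype.card_fin]
    have e1 : (∏ i : Fin n, ∏ j ∈ Finset.Ioi (Fin.succ i), (w j - w i.succ)) = C V := by
      have key : ∀ i : Fin n, (∏ j ∈ Finset.Ioi (Fin.succ i), (w j - w i.succ)) =
          C (∏ j ∈ Finset.Ioi i, (u j - u i)) := by
        intro i
        rw [Fin.prod_Ioi_succ, map_prod]
        simp [hw]
      simp_rw [key, ← map_prod]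
      congr 1
      rw [hV, Finset.prod_sigma', Finset.prod_sigma']
      exact Finset.prod_nbij' (fun p => ⟨p.2, p.1⟩) (fun p => ⟨p.2, p.1⟩)
        (by simp [Finset.mem_Ioi]) (by simp [Finset.mem_Ioi]) (by simp) (by simp) (by simp)
    rw [e0, e1]
    simp only [_root_.map_mul, map_pow, map_neg, Polynomial.C_1]
    ring
  -- step 3 : compare coefficients at ℓ
  have hcl : (∑ j : Fin (n + 1), C ((-1) ^ (j : ℕ) * d j) * X ^ (j : ℕ)).coeff ℓ
      = (-1) ^ ℓ * d ℓ' := by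
    rw [Polynomial.finset_sum_coeff]
    rw [Finset.sum_eq_single ℓ']
    · rw [coeff_C_mul, coeff_X_pow]
      simp [hℓ']
    · intro j _ hj
      rw [coeff_C_mul, coeff_X_pow, if_neg, mul_zero]
      intro h
      exact hj (Fin.ext (by simp [hℓ', ← h]))
    · simp
  have hcr : (C ((-1) ^ n * V) * ∏ i : Fin n, (X - C (u i))).coeff ℓ
      = (-1) ^ n * V * ((-1) ^ (n - ℓ) * σ) := by
    rw [coeff_C_mul]
    congr 1
    have hp : (∏ i : Fin n, (X - C (u i)))
        = ((Finset.univ.val.map u).map (fun t => X - C t)).prod := by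
      rw [Multiset.map_map]; rfl
    have hcard : Multiset.card (Finset.univ.val.map u) = n := by simp
    rw [hp, Multiset.prod_X_sub_C_coeff _ (by rw [hcard]; exact hℓ), hcard,
      Finset.esymm_map_val]
  have h3 : (-1 : F) ^ ℓ * d ℓ' = (-1) ^ n * V * ((-1) ^ (n - ℓ) * σ) := by
    rw [← hcl, ← hcr, ← h1, ← h2]
  -- sign juggling
  have hsign : ((-1 : F) ^ n * (-1) ^ (n - ℓ)) = (-1) ^ ℓ := by
    rw [← pow_add]
    have : n + (n - ℓ) = ℓ + 2 * (n - ℓ) := by omega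
    rw [this, pow_add, pow_mul]
    simp
  have h4 : d ℓ' = V * σ := by
    have h5 : (-1 : F) ^ ℓ * d ℓ' = (-1) ^ ℓ * (V * σ) := by
      rw [h3, ← hsign]; ring
    exact mul_left_cancel₀ (pow_ne_zero _ (by norm_num)) h5
  -- identify the target determinant with d ℓ'
  have hsA : ∀ j' : Fin n, (ℓ'.succAbove j' : ℕ)
      = if (j' : ℕ) < ℓ then (j' : ℕ) else (j' : ℕ) + 1 := by
    intro j'
    rw [Fin.succAbove]
    split_ifs with h h2 h3
    · rfl
    · exact absurd (by simpa [Fin.lt_def, hℓ'] using h) h2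
    · exact absurd (by simpa [Fin.lt_def, hℓ'] using h3) h
    · simp
  have hfin : Matrix.det (Matrix.of fun i j : Fin n =>
      u j ^ (if (i : ℕ) < ℓ then (i : ℕ) else (i : ℕ) + 1)) = d ℓ' := by
    rw [← Matrix.det_transpose]
    congr 1
    ext i j
    simp [Matrix.transpose_apply, hsA]
  rw [hfin, h4]
end

section
/- Let δ be a power of a prime p and q = δ^m with m ≥ 2. The narrow-sense antiprimitive BCH code C_{(q, q+1, δ, 1)} = {c ∈ GF(q)^{U_{q+1}} : Σ_{u ∈ U_{q+1}} c_u u^i = 0 for all 1 ≤ |i| ≤ δ - 1} has minimum Hamming distance exactly δ + 1. -/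
/-- Membership in the narrow-sense antiprimitive BCH code `C_{(q, q+1, δ, 1)}`:
a vector `(c_u)_{u ∈ U_{q+1}}` over `GF(q)` satisfying `∑_u c_u u^i = 0` in `GF(q²)`
for all `i` with `1 ≤ |i| ≤ δ - 1`. -/
def IsBCHWord (q δ : ℕ) (F K : Type*) [Field F] [Field K] [Finite K] [Algebra F K]
    (c : {x : K // x ^ (q + 1) = 1} → F) : Prop :=
  letI : Fintype {x : K // x ^ (q + 1) = 1} := Fintype.ofFinite _
  ∀ i : ℤ, 1 ≤ |i| → |i| ≤ (δ : ℤ) - 1 →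
    ∑ u : {x : K // x ^ (q + 1) = 1}, algebraMap F K (c u) * (u : K) ^ i = 0

/-- The Hamming weight of a vector. -/
noncomputable def hWeight {ι F : Type*} [Zero F] (c : ι → F) : ℕ :=
  {u : ι | c u ≠ 0}.ncard

/-!
Lower bound. Multiplying by `u^{-(δ-1)}` turns a codeword supported on `S` into nonzero weights
`b_u` with `∑_{u ∈ S} b_u u^k = 0` for `0 ≤ k ≤ 2δ-2`, `k ≠ δ-1`, hence `∑_{u ∈ S} b_u g(u) = 0`
for every polynomial `g` supported on these exponents. Let `N_u = ∏_{v ∈ S∖{u}} (X - v)`. If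
`|S| < δ`, then `g = N_u` forces `b_u = 0`. If `|S| = δ`, then `g = N_u (X^{δ-1} - N_u(0))` has no
`X^{δ-1}` term and gives `u^δ = -∏_{v ∈ S} (-v)` for every `u ∈ S`; since `x ↦ x^δ` is injective
in characteristic `p`, `|S| ≤ 1`.

Upper bound. Embed `GF(δ)` in `K` and pick `u₀ ∈ K` with `u₀^q ≠ u₀`. For `x ∈ GF(δ)` the points
`u(x) = (x + u₀^q)/(x + u₀)` are distinct elements of `U_{q+1} ∖ {1}`, and for `1 ≤ i ≤ δ-1` the
term `((x + u₀)(x + u₀^q))^{δ-1} u(x)^i` is a monic polynomial of degree `δ-1` in `x`, because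
`(x + u₀^q)^δ = x + u₀^{qδ}`. Its sum over `GF(δ)` is `-1`, which the coordinate `c_1 = 1`
cancels. Negative `i` follow by exchanging `u₀` and `u₀^q`.
-/

open Polynomial Finset Lagrange

section BCHBound

variable {ι K : Type*} [Field K] {s : Finset ι} {ν b : ι → K}

theorem sum_mul_eval_eq_zero_of_coeff_eq_zero {I : Set ℕ}
    (h : ∀ k ∈ I, ∑ i ∈ s, b i * ν i ^ k = 0) {g : K[X]} (hg : ∀ k ∉ I, g.coeff k = 0) :
    ∑ i ∈ s, b i * g.eval (ν i) = 0 := by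
  simp_rw [eval_eq_sum, Polynomial.sum_def, mul_sum]
  rw [sum_comm]
  refine sum_eq_zero fun k hk => ?_
  have hkI : k ∈ I := by_contra fun hkI => mem_support_iff.mp hk (hg k hkI)
  calc ∑ i ∈ s, b i * (g.coeff k * ν i ^ k) = g.coeff k * ∑ i ∈ s, b i * ν i ^ k := by
        rw [mul_sum]; exact sum_congr rfl fun i _ => by ring
    _ = 0 := by rw [h k hkI, mul_zero]

variable [DecidableEq ι]

theorem mul_eval_eq_zero_of_coeff_nodal_erase_mul_eq_zero {I : Set ℕ} (hν : Set.InjOn ν s)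
    (h : ∀ k ∈ I, ∑ i ∈ s, b i * ν i ^ k = 0) {j : ι} (hj : j ∈ s) {L : K[X]}
    (hL : ∀ k ∉ I, (nodal (s.erase j) ν * L).coeff k = 0) : b j * L.eval (ν j) = 0 := by
  have hsum := sum_mul_eval_eq_zero_of_coeff_eq_zero h hL
  rw [sum_eq_single j (fun i hi hij => by
    rw [eval_mul, eval_nodal_at_node (mem_erase.mpr ⟨hij, hi⟩), zero_mul, mul_zero])
    (absurd hj), eval_mul, mul_left_comm] at hsum
  refine (mul_eq_zero.mp hsum).resolve_left (eval_nodal_not_at_node fun i hi hji => ?_)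
  exact (mem_erase.mp hi).1 (hν (mem_erase.mp hi).2 hj hji.symm)

theorem eq_zero_of_card_le (hν : Set.InjOn ν s) {n : ℕ}
    (h : ∀ k ≤ 2 * n, k ≠ n → ∑ i ∈ s, b i * ν i ^ k = 0) (hs : #s ≤ n) {j : ι} (hj : j ∈ s) :
    b j = 0 := by
  have hdeg : (nodal (s.erase j) ν).natDegree < n := by
    rw [natDegree_nodal, card_erase_of_mem hj]
    have := card_pos.mpr ⟨j, hj⟩
    omega
  have := mul_eval_eq_zero_of_coeff_nodal_erase_mul_eq_zero (I := {k | k ≤ 2 * n ∧ k ≠ n}) hν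
    (fun k hk => h k hk.1 hk.2) hj (L := 1) fun k hk => by
      rw [mul_one]
      refine coeff_eq_zero_of_natDegree_lt ?_
      simp only [Set.mem_ofPred_eq, not_and_or, not_le, not_not] at hk
      omega
  simpa using this

theorem pow_succ_eq_neg_prod_neg_of_card_eq (hν : Set.InjOn ν s) {n : ℕ}
    (h : ∀ k ≤ 2 * n, k ≠ n → ∑ i ∈ s, b i * ν i ^ k = 0) (hs : #s = n + 1) {j : ι}
    (hj : j ∈ s) (hbj : b j ≠ 0) :
    ν j ^ (n + 1) = -∏ i ∈ s, -ν i := by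
  set N := nodal (s.erase j) ν
  have hN : N.natDegree = n := by rw [natDegree_nodal, card_erase_of_mem hj, hs, Nat.add_sub_cancel]
  have hlead : N.coeff n = 1 := hN ▸ nodal_monic.coeff_natDegree
  have := mul_eval_eq_zero_of_coeff_nodal_erase_mul_eq_zero (I := {k | k ≤ 2 * n ∧ k ≠ n}) hν
    (fun k hk => h k hk.1 hk.2) hj (L := X ^ n - C (N.coeff 0)) fun k hk => by
      simp only [Set.mem_ofPred_eq, not_and_or, not_le, not_not] at hk
      rcases hk with hk | hk
      · refine coeff_eq_zero_of_natDegree_lt ((natDegree_mul_le).trans_lt ?_)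
        rw [hN, natDegree_X_pow_sub_C]
        omega
      · rw [hk, mul_sub, coeff_sub, coeff_mul_X_pow', if_pos le_rfl, Nat.sub_self, coeff_mul_C]
        exact sub_eq_zero.mpr (by rw [hlead, one_mul])
  rw [eval_sub, eval_pow, eval_X, eval_C, mul_eq_zero, sub_eq_zero] at this
  rw [pow_succ', this.resolve_left hbj, coeff_zero_eq_eval_zero, eval_nodal,
    ← mul_prod_erase s _ hj]
  simp

theorem add_one_lt_card_of_sum_mul_zpow_eq_zero {a : ι → K} {n : ℕ} (hn : n ≠ 0)
    (hν : Set.InjOn (fun i => ν i ^ (n + 1)) s) (hν0 : ∀ i ∈ s, ν i ≠ 0)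
    (ha : ∀ i ∈ s, a i ≠ 0) (hs : s.Nonempty)
    (h : ∀ k : ℤ, 1 ≤ |k| → |k| ≤ n → ∑ i ∈ s, a i * ν i ^ k = 0) :
    n + 1 < #s := by
  have hν' : Set.InjOn ν s := fun i hi j hj hij => hν hi hj (by simp only [hij])
  set b : ι → K := fun i => a i * ν i ^ (-n : ℤ)
  have hb : ∀ i ∈ s, b i ≠ 0 := fun i hi => mul_ne_zero (ha i hi) (zpow_ne_zero _ (hν0 i hi))
  have hshift : ∀ k ≤ 2 * n, k ≠ n → ∑ i ∈ s, b i * ν i ^ k = 0 := fun k hk hkn => by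
    rw [← h (k - n) (le_abs.mpr (by omega)) (abs_le.mpr ⟨by omega, by omega⟩)]
    refine sum_congr rfl fun i hi => ?_
    rw [mul_assoc, ← zpow_natCast, ← zpow_add₀ (hν0 i hi), neg_add_eq_sub]
  by_contra! hcard
  obtain ⟨j, hj⟩ := hs
  rcases hcard.lt_or_eq with hlt | heq
  · exact hb j hj (eq_zero_of_card_le hν' hshift (by omega) hj)
  · have hconst : ∀ i ∈ s, ν i ^ (n + 1) = -∏ v ∈ s, -ν v := fun i hi =>
      pow_succ_eq_neg_prod_neg_of_card_eq hν' hshift heq hi (hb i hi)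
    have : #s ≤ 1 := card_le_one.mpr fun i hi i' hi' =>
      hν hi hi' ((hconst i hi).trans (hconst i' hi').symm)
    omega

end BCHBound

theorem hWeight_eq_card_filter {ι M : Type*} [Fintype ι] [Zero M] [DecidableEq M] (c : ι → M) :
    hWeight c = #(univ.filter fun u => c u ≠ 0) := by
  rw [hWeight, ← Set.ncard_coe_finset, coe_filter_univ]

theorem hWeight_extend {ι κ M : Type*} [Zero M] {e : ι → κ} (he : Function.Injective e)
    {w : ι → M} (hw : ∀ j, w j ≠ 0) : hWeight (Function.extend e w 0) = Nat.card ι := by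
  rw [hWeight, ← Set.ncard_range_of_injective he]
  congr 1
  ext u
  by_cases hu : ∃ j, e j = u
  · obtain ⟨j, rfl⟩ := hu
    simp [he.extend_apply, hw]
  · simp [hu]

section Code

variable {F K : Type*} [Field F] [Field K] [Algebra F K] {q δ : ℕ}

theorem isBCHWord_iff [Finite K] [Fintype {x : K // x ^ (q + 1) = 1}]
    (c : {x : K // x ^ (q + 1) = 1} → F) :
    IsBCHWord q δ F K c ↔ ∀ i : ℤ, 1 ≤ |i| → |i| ≤ (δ : ℤ) - 1 →
      ∑ u, algebraMap F K (c u) * (u : K) ^ i = 0 := by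
  unfold IsBCHWord
  convert Iff.rfl

theorem sum_extend_mul_zpow {ι : Type*} [Fintype ι] [Fintype {x : K // x ^ (q + 1) = 1}]
    {e : ι → {x : K // x ^ (q + 1) = 1}} (he : Function.Injective e) (w : ι → F) (i : ℤ) :
    ∑ u, algebraMap F K (Function.extend e w 0 u) * (u : K) ^ i
      = ∑ j, algebraMap F K (w j) * (e j : K) ^ i :=
  (Fintype.sum_of_injective e he _ _
    (fun u hu => by rw [Function.extend_apply' _ _ _ fun ⟨j, hj⟩ => hu ⟨j, hj⟩]; simp)
    (fun j => by rw [he.extend_apply])).symm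

theorem le_hWeight_of_isBCHWord [Finite K] {p r : ℕ} [Fact p.Prime] [CharP K p] (hr : r ≠ 0)
    {c : {x : K // x ^ (q + 1) = 1} → F} (hc : IsBCHWord q (p ^ r) F K c) (hc0 : c ≠ 0) :
    p ^ r + 1 ≤ hWeight c := by
  classical
  let _ := Fintype.ofFinite {x : K // x ^ (q + 1) = 1}
  have hδ : 2 ≤ p ^ r := Nat.one_lt_pow hr (Fact.out : p.Prime).one_lt
  rw [hWeight_eq_card_filter]
  obtain ⟨u, hu⟩ := Function.ne_iff.mp hc0
  have := add_one_lt_card_of_sum_mul_zpow_eq_zero (s := univ.filter fun u => c u ≠ 0)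
    (ν := Subtype.val) (a := fun u => algebraMap F K (c u)) (n := p ^ r - 1) (by omega)
    (fun u _ v _ huv => Subtype.ext <| iterateFrobenius_inj K p r <| by
      simpa only [iterateFrobenius_def, Nat.sub_add_cancel (by omega : 1 ≤ p ^ r)] using huv)
    (fun u _ h0 => by simpa [h0] using u.2)
    (fun u hu => (_root_.map_ne_zero _).mpr (mem_filter.mp hu).2)
    ⟨u, mem_filter.mpr ⟨mem_univ u, hu⟩⟩
    (fun k hk1 hk2 => by
      rw [sum_filter_of_ne fun u _ hu => by simpa using left_ne_zero_of_mul hu]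
      exact (isBCHWord_iff c).mp hc k hk1 (by push_cast [Nat.one_le_of_lt hδ] at hk2 ⊢; exact hk2))
  omega

end Code

theorem FiniteField.sum_pow_card_sub_one (L : Type*) [Field L] [Fintype L] :
    ∑ x : L, x ^ (Fintype.card L - 1) = -1 := by
  classical
  have hL := Fintype.one_lt_card (α := L)
  rw [← sum_erase_add _ _ (mem_univ 0), zero_pow (by omega), add_zero,
    sum_congr rfl fun x hx => FiniteField.pow_card_sub_one_eq_one x (ne_of_mem_erase hx),
    sum_const, card_erase_of_mem (mem_univ _), card_univ, nsmul_one, Nat.cast_sub hL.le,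
    FiniteField.cast_card_eq_zero, Nat.cast_one, zero_sub]

theorem sum_eval_ringHom_eq_neg_one {L K : Type*} [Field L] [Fintype L] [CommRing K]
    (φ : L →+* K) {g : K[X]} (hg : g.Monic) (hdeg : g.natDegree = Fintype.card L - 1) :
    ∑ y : L, g.eval (φ y) = -1 := by
  set n := Fintype.card L - 1
  calc ∑ y : L, g.eval (φ y) = ∑ j ∈ range (n + 1), g.coeff j * φ (∑ y : L, y ^ j) := by
        simp_rw [eval_eq_sum_range, hdeg, map_sum, map_pow, mul_sum]
        exact sum_comm
    _ = ∑ j ∈ range (n + 1), if j = n then -1 else 0 := sum_congr rfl fun j hj => by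
        rcases (Nat.lt_succ_iff.mp (mem_range.mp hj)).lt_or_eq with hjn | rfl
        · rw [FiniteField.sum_pow_lt_card_sub_one (K := L) j hjn, map_zero, mul_zero,
            if_neg hjn.ne]
        · rw [FiniteField.sum_pow_card_sub_one, ← hdeg, hg.coeff_natDegree, map_neg, map_one,
            one_mul, if_pos rfl]
    _ = -1 := by simp

theorem sum_pow_mul_div_pow_eq_neg_one {p r : ℕ} [Fact p.Prime] {K L : Type*} [Field K]
    [CharP K p] [Field L] [Fintype L] (hL : Fintype.card L = p ^ r) (φ : L →+* K) {a b : K}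
    (ha : ∀ y, φ y + a ≠ 0) {i : ℕ} (hi : 1 ≤ i) (hi' : i ≤ Fintype.card L - 1) :
    ∑ y : L, ((φ y + a) * (φ y + b)) ^ (Fintype.card L - 1) * ((φ y + b) / (φ y + a)) ^ i
      = -1 := by
  obtain ⟨k, hk⟩ : ∃ k, Fintype.card L - 1 = k + i := ⟨_, (Nat.sub_add_cancel hi').symm⟩
  obtain ⟨j, rfl⟩ : ∃ j, i = j + 1 := ⟨i - 1, by omega⟩
  set g : K[X] := (X + C (b ^ Fintype.card L)) * (X + C a) ^ k * (X + C b) ^ j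
  have hg : g.Monic :=
    ((monic_X_add_C _).mul ((monic_X_add_C _).pow _)).mul ((monic_X_add_C _).pow _)
  have hdeg : g.natDegree = Fintype.card L - 1 := by
    rw [((monic_X_add_C _).mul ((monic_X_add_C _).pow _)).natDegree_mul ((monic_X_add_C _).pow _),
      (monic_X_add_C _).natDegree_mul ((monic_X_add_C _).pow _), natDegree_X_add_C,
      natDegree_pow_X_add_C, natDegree_pow_X_add_C]
    omega
  have hsummand (A B : K) (hA : A ≠ 0) :
      (A * B) ^ (k + (j + 1)) * (B / A) ^ (j + 1) = B ^ (k + j + 2) * A ^ k * B ^ j := by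
    rw [div_pow, mul_pow, pow_add A]
    field_simp
    ring
  rw [← sum_eval_ringHom_eq_neg_one φ hg hdeg]
  refine sum_congr rfl fun y _ => ?_
  have hfrob : (φ y + b) ^ Fintype.card L = φ y + b ^ Fintype.card L := by
    rw [hL, add_pow_char_pow, ← map_pow, ← hL, FiniteField.pow_card]
  simp only [g, eval_mul, eval_pow, eval_add, eval_X, eval_C, ← hfrob, hk, hsummand _ _ (ha y)]
  rw [show Fintype.card L = k + j + 2 by omega]

theorem sum_pow_mul_div_zpow_eq_neg_one {p r : ℕ} [Fact p.Prime] {K L : Type*} [Field K]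
    [CharP K p] [Field L] [Fintype L] (hL : Fintype.card L = p ^ r) (φ : L →+* K) {a b : K}
    (ha : ∀ y, φ y + a ≠ 0) (hb : ∀ y, φ y + b ≠ 0) {i : ℤ} (hi1 : 1 ≤ |i|)
    (hi2 : |i| ≤ (Fintype.card L : ℤ) - 1) :
    ∑ y : L, ((φ y + a) * (φ y + b)) ^ (Fintype.card L - 1) * ((φ y + b) / (φ y + a)) ^ i
      = -1 := by
  obtain ⟨k, rfl | rfl⟩ := Int.eq_nat_or_neg i
  all_goals
    simp only [abs_neg, Nat.abs_cast] at hi1 hi2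
    have hk1 : 1 ≤ k := by exact_mod_cast hi1
    have hk2 : k ≤ Fintype.card L - 1 := by omega
  · simpa only [zpow_natCast] using sum_pow_mul_div_pow_eq_neg_one hL φ ha hk1 hk2
  · rw [← sum_pow_mul_div_pow_eq_neg_one hL φ hb hk1 hk2 (b := a)]
    refine sum_congr rfl fun y _ => ?_
    rw [zpow_neg, zpow_natCast, ← inv_pow, inv_div, mul_comm (φ y + a)]

theorem nonempty_galoisField_ringHom {p : ℕ} [Fact p.Prime] {K : Type*} [Field K] [Fintype K]
    [CharP K p] {r n : ℕ} (hr : r ≠ 0) (hK : Fintype.card K = p ^ n) (hrn : r ∣ n) :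
    Nonempty (GaloisField p r →+* K) := by
  let _ := ZMod.algebra K p
  have hn : Module.finrank (ZMod p) K = n := Nat.pow_right_injective (Fact.out : p.Prime).two_le
    (by simp only [FiniteField.pow_finrank_eq_card, hK])
  obtain ⟨f⟩ := FiniteField.nonempty_algHom_of_finrank_dvd (F := ZMod p)
    (K := GaloisField p r) (L := K) (by rw [GaloisField.finrank p hr, hn]; exact hrn)
  exact ⟨f.toRingHom⟩

theorem FiniteField.exists_pow_ne_self {K : Type*} [Field K] [Fintype K] {q : ℕ} (hq : 1 < q)
    (hqK : q < Fintype.card K) : ∃ x : K, x ^ q ≠ x := by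
  classical
  by_contra! h
  have := card_le_degree_of_subset_roots (p := (X ^ q - X : K[X])) (Z := univ) fun x _ =>
    (mem_roots (FiniteField.X_pow_card_sub_X_ne_zero K hq)).mpr (by simp [h x])
  rw [FiniteField.X_pow_card_sub_X_natDegree_eq K hq, card_univ] at this
  omega

theorem FiniteField.algebraMap_norm_eq_pow_succ {F K : Type*} [Field F] [Fintype F] [Field K]
    [Fintype K] [Algebra F K] {q : ℕ} (hF : Fintype.card F = q) (hK : Fintype.card K = q ^ 2)
    (x : K) : algebraMap F K (Algebra.norm F x) = x ^ (q + 1) := by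
  have hq : 1 < q := hF ▸ Fintype.one_lt_card
  rw [FiniteField.algebraMap_norm_eq_pow, Nat.card_eq_fintype_card, Nat.card_eq_fintype_card,
    hK, hF, Nat.div_eq_of_eq_mul_left (by omega)]
  zify [hq.le, Nat.one_le_pow 2 q (by omega)]
  ring

theorem eq_of_add_div_add_eq {K : Type*} [Field K] {a b x y : K} (hab : b ≠ a) (hx : x + a ≠ 0)
    (hy : y + a ≠ 0) (h : (x + b) / (x + a) = (y + b) / (y + a)) : x = y := by
  rw [div_eq_div_iff hx hy] at h
  refine sub_eq_zero.mp ((mul_eq_zero.mp ?_).resolve_right (sub_ne_zero.mpr hab))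
  linear_combination -h

section Conjugation

variable {p : ℕ} [Fact p.Prime] {K : Type*} [Field K] [CharP K p] {q n : ℕ}

theorem add_pow_eq_of_pow_eq_self (hq : q = p ^ n) {x : K} (hx : x ^ q = x) (t : K) :
    (x + t) ^ q = x + t ^ q := by
  rw [hq, add_pow_char_pow, ← hq, hx]

theorem add_pow_succ_eq_of_pow_eq_self (hq : q = p ^ n) {x : K} (hx : x ^ q = x) (t : K) :
    (x + t) ^ (q + 1) = (x + t) * (x + t ^ q) := by
  rw [pow_succ', add_pow_eq_of_pow_eq_self hq hx]

theorem add_ne_zero_of_pow_eq_self (hq : q = p ^ n) {x t : K} (hx : x ^ q = x)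
    (ht : t ^ q ≠ t) : x + t ≠ 0 := by
  intro h0
  have := add_pow_eq_of_pow_eq_self hq hx t
  rw [h0, zero_pow (hq ▸ pow_ne_zero _ (Fact.out : p.Prime).ne_zero)] at this
  exact ht (by linear_combination -h0 - this)

end Conjugation

theorem exists_isBCHWord_hWeight_eq_card_add_one {p : ℕ} [Fact p.Prime] {F K L : Type*}
    [Field F] [Fintype F] [Field K] [Fintype K] [Algebra F K] [CharP K p] [Field L] [Fintype L]
    {q n r : ℕ} (hq : q = p ^ n) (hF : Fintype.card F = q) (hK : Fintype.card K = q ^ 2)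
    (hL : Fintype.card L = p ^ r) (φ : L →+* K) (hφ : ∀ y, φ y ^ q = φ y) {u₀ : K}
    (hu₀ : u₀ ^ q ≠ u₀) :
    ∃ c : {x : K // x ^ (q + 1) = 1} → F,
      IsBCHWord q (Fintype.card L) F K c ∧ c ≠ 0 ∧ hWeight c = Fintype.card L + 1 := by
  classical
  let _ := Fintype.ofFinite {x : K // x ^ (q + 1) = 1}
  set b := u₀ ^ q
  have hbq : b ^ q = u₀ := by rw [← pow_mul, ← sq, ← hK, FiniteField.pow_card]
  have ha (y : L) : φ y + u₀ ≠ 0 := add_ne_zero_of_pow_eq_self hq (hφ y) hu₀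
  have hb (y : L) : φ y + b ≠ 0 :=
    add_ne_zero_of_pow_eq_self hq (hφ y) (by rw [hbq]; exact Ne.symm hu₀)
  -- `v` is the paper's `u(x)`, and `w` its weights `(x + u₀)^{(q+1)(δ-1)}`, written as norms
  -- so that they lie in `F`.
  set v : L → K := fun y => (φ y + b) / (φ y + u₀)
  have hv (y : L) : v y ^ (q + 1) = 1 := by
    rw [div_pow, add_pow_succ_eq_of_pow_eq_self hq (hφ y), hbq,
      add_pow_succ_eq_of_pow_eq_self hq (hφ y), mul_comm]
    exact div_self (mul_ne_zero (ha y) (hb y))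
  set e : Option L → {x : K // x ^ (q + 1) = 1} :=
    Option.elim' ⟨1, one_pow _⟩ fun y => ⟨v y, hv y⟩
  set w : Option L → F := Option.elim' 1 fun y => Algebra.norm F (φ y + u₀) ^ (Fintype.card L - 1)
  have hw (y : L) :
      algebraMap F K (w (some y)) = ((φ y + u₀) * (φ y + b)) ^ (Fintype.card L - 1) := by
    show algebraMap F K (Algebra.norm F (φ y + u₀) ^ _) = _
    rw [map_pow, FiniteField.algebraMap_norm_eq_pow_succ hF hK,
      add_pow_succ_eq_of_pow_eq_self hq (hφ y)]
  have hw0 : ∀ j, w j ≠ 0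
    | none => one_ne_zero
    | some y => fun h0 => pow_ne_zero _ (mul_ne_zero (ha y) (hb y)) (by rw [← hw, h0, map_zero])
  have he : Function.Injective e := Option.injective_iff.mpr
    ⟨fun y y' h => φ.injective (eq_of_add_div_add_eq hu₀ (ha y) (ha y') (congrArg Subtype.val h)),
      fun ⟨y, hy⟩ =>
        hu₀ (add_left_cancel ((div_eq_one_iff_eq (ha y)).mp (congrArg Subtype.val hy)))⟩
  refine ⟨Function.extend e w 0, (isBCHWord_iff _).mpr fun i hi1 hi2 => ?_, fun h0 => ?_, ?_⟩
  · rw [sum_extend_mul_zpow he, Fintype.sum_option]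
    simp only [e, v, Option.elim'_none, Option.elim'_some, one_zpow, hw,
      show w none = 1 from rfl, map_one, mul_one]
    rw [sum_pow_mul_div_zpow_eq_neg_one hL φ ha hb hi1 hi2, add_neg_cancel]
  · have := congr_fun h0 (e none)
    rw [he.extend_apply] at this
    exact one_ne_zero this
  · rw [hWeight_extend he hw0, Nat.card_eq_fintype_card, Fintype.card_option]

theorem stmt_13_general (p r m δ q : ℕ) (hp : p.Prime) (hr : 0 < r)
    (hδ : δ = p ^ r) (hq : q = δ ^ m)
    (F K : Type*) [Field F] [Fintype F] [Field K] [Fintype K] [Algebra F K]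
    (hF : Fintype.card F = q) (hK : Fintype.card K = q ^ 2) :
    (∀ c : {x : K // x ^ (q + 1) = 1} → F,
        IsBCHWord q δ F K c → c ≠ 0 → δ + 1 ≤ hWeight c) ∧
      ∃ c : {x : K // x ^ (q + 1) = 1} → F,
        IsBCHWord q δ F K c ∧ c ≠ 0 ∧ hWeight c = δ + 1 := by
  have := Fact.mk hp
  subst hδ
  have hqp : q = p ^ (r * m) := by rw [hq, ← pow_mul]
  have hKp : Fintype.card K = p ^ (r * m * 2) := by rw [hK, hqp, ← pow_mul]
  have := charP_of_card_eq_prime_pow hKp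
  refine ⟨fun c hc hc0 => le_hWeight_of_isBCHWord hr.ne' hc hc0, ?_⟩
  obtain ⟨φ⟩ := nonempty_galoisField_ringHom hr.ne' hKp (Dvd.intro _ (mul_assoc r m 2).symm)
  let _ := Fintype.ofFinite (GaloisField p r)
  have hL : Fintype.card (GaloisField p r) = p ^ r := by
    rw [Fintype.card_eq_nat_card, GaloisField.card p r hr.ne']
  have hφ (y : GaloisField p r) : φ y ^ q = φ y := by
    rw [← map_pow, hq, ← hL, FiniteField.pow_card_pow]
  have hq1 : 1 < q := hF ▸ Fintype.one_lt_card
  obtain ⟨u₀, hu₀⟩ := FiniteField.exists_pow_ne_self hq1 (by rw [hK]; nlinarith)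
  simpa only [hL] using exists_isBCHWord_hWeight_eq_card_add_one hqp hF hK hL φ hφ hu₀

theorem stmt_13 (p r m δ q : ℕ) (hp : p.Prime) (hr : 0 < r) (hm : 2 ≤ m)
    (hδ : δ = p ^ r) (hq : q = δ ^ m)
    (F K : Type*) [Field F] [Fintype F] [Field K] [Fintype K] [Algebra F K]
    (hF : Fintype.card F = q) (hK : Fintype.card K = q ^ 2) :
    (∀ c : {x : K // x ^ (q + 1) = 1} → F,
        IsBCHWord q δ F K c → c ≠ 0 → δ + 1 ≤ hWeight c) ∧
      ∃ c : {x : K // x ^ (q + 1) = 1} → F,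
        IsBCHWord q δ F K c ∧ c ≠ 0 ∧ hWeight c = δ + 1 :=
  stmt_13_general p r m δ q hp hr hδ hq F K hF hK
end

section
/- Let p be a prime, q = p^m, and δ a power of p. For any c, d ∈ GF(q²) with c^{q+1} ≠ d^{q+1}, and any function f : U_{q+1} → GF(q) of the form f(u) = Tr_{q²/q}(Σ_{i=1}^{δ-1} a_i u^i) with a_i ∈ GF(q²), the function u ↦ (c u + d)^{(q+1)(δ-1)} · f((d^q u + c^q)/(c u + d)) is again of this form, i.e., it equals Tr_{q²/q}(Σ_{i=1}^{δ-1} b_i u^i) on U_{q+1} for some b_i ∈ GF(q²). -/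
open Polynomial Finset in
theorem stmt_16 (p m r δ q : ℕ) (hp : p.Prime) (hm : 0 < m) (hr : 0 < r)
    (hq : q = p ^ m) (hδ : δ = p ^ r)
    (K : Type*) [Field K] [Fintype K] (hK : Fintype.card K = q ^ 2)
    (c d : K) (hcd : c ^ (q + 1) ≠ d ^ (q + 1)) (a : ℕ → K) :
    ∃ b : ℕ → K, ∀ u : K, u ^ (q + 1) = 1 →
      (c * u + d) ^ ((q + 1) * (δ - 1)) *
          ((∑ i ∈ Finset.Icc 1 (δ - 1), a i * ((d ^ q * u + c ^ q) / (c * u + d)) ^ i) +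
            (∑ i ∈ Finset.Icc 1 (δ - 1), a i * ((d ^ q * u + c ^ q) / (c * u + d)) ^ i) ^ q) =
        (∑ i ∈ Finset.Icc 1 (δ - 1), b i * u ^ i) +
          (∑ i ∈ Finset.Icc 1 (δ - 1), b i * u ^ i) ^ q := by
  haveI hFp : Fact p.Prime := ⟨hp⟩
  -- the characteristic of K is p
  haveI hchar : CharP K p := by
    have h1 : CharP K (ringChar K) := ringChar.charP K
    obtain ⟨n, hpr, hcard⟩ := FiniteField.card K (ringChar K)
    have hdvd : (ringChar K) ∣ p ^ (m * 2) := by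
      rw [pow_mul, ← hq, ← hK, hcard]
      exact dvd_pow_self _ (by exact_mod_cast n.ne_zero)
    have h2 : ringChar K = p :=
      (Nat.prime_dvd_prime_iff_eq hpr hp).mp (hpr.dvd_of_dvd_pow hdvd)
    rwa [h2] at h1
  have frq : ∀ x y : K, (x + y) ^ q = x ^ q + y ^ q := by
    intro x y; rw [hq]; exact add_pow_char_pow x y p m
  have hpow : ∀ x : K, (x ^ q) ^ q = x := by
    intro x
    rw [← pow_mul, show q * q = q ^ 2 by ring, ← hK]
    exact FiniteField.pow_card x
  have hφ : ∀ x : K, (iterateFrobenius K p m) x = x ^ q := by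
    intro x; rw [iterateFrobenius_def, ← hq]
  have hsumq : ∀ (s : Finset ℕ) (f : ℕ → K),
      (∑ i ∈ s, f i) ^ q = ∑ i ∈ s, (f i) ^ q := by
    intro s f
    calc (∑ i ∈ s, f i) ^ q = iterateFrobenius K p m (∑ i ∈ s, f i) := (hφ _).symm
      _ = ∑ i ∈ s, iterateFrobenius K p m (f i) := map_sum _ _ _
      _ = ∑ i ∈ s, (f i) ^ q := by simp only [hφ]
  set N := δ - 1 with hN
  have hN1 : 1 ≤ N := by
    have : 2 ≤ δ := by
      rw [hδ]
      calc 2 ≤ p := hp.two_le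
        _ = p ^ 1 := (pow_one p).symm
        _ ≤ p ^ r := Nat.pow_le_pow_right hp.pos hr
    omega
  have hNδ : N + 1 = δ := by
    have : 2 ≤ δ := by omega
    omega
  set A : K[X] := C c * X + C d with hA
  set B : K[X] := C (d ^ q) * X + C (c ^ q) with hB
  set P : K[X] := ∑ i ∈ Icc 1 N, C (a i) * (A ^ (N - i) * B ^ (N + i)) with hP
  -- degree bound
  have hdegP : P.natDegree ≤ 2 * N := by
    apply Polynomial.natDegree_sum_le_of_forall_le
    intro i hi
    rw [Finset.mem_Icc] at hi
    calc (C (a i) * (A ^ (N - i) * B ^ (N + i))).natDegree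
        ≤ (A ^ (N - i) * B ^ (N + i)).natDegree := natDegree_C_mul_le _ _
      _ ≤ (A ^ (N - i)).natDegree + (B ^ (N + i)).natDegree := natDegree_mul_le
      _ ≤ (N - i) * A.natDegree + (N + i) * B.natDegree :=
          Nat.add_le_add natDegree_pow_le natDegree_pow_le
      _ ≤ (N - i) * 1 + (N + i) * 1 :=
          Nat.add_le_add (Nat.mul_le_mul_left _ natDegree_linear_le)
            (Nat.mul_le_mul_left _ natDegree_linear_le)
      _ ≤ 2 * N := by omega
  -- the middle coefficient vanishes
  have hcN : P.coeff N = 0 := by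
    rw [hP, finset_sum_coeff]
    apply Finset.sum_eq_zero
    intro i hi
    rw [Finset.mem_Icc] at hi
    have hBsplit : B ^ (N + i) = B ^ (i - 1) * B ^ δ := by
      rw [← pow_add]; congr 1; omega
    have hBδ : B ^ δ = C ((d ^ q) ^ δ) * X ^ δ + C ((c ^ q) ^ δ) := by
      rw [hB, hδ, add_pow_char_pow, mul_pow, ← C_pow, ← C_pow]
    have hsplit : C (a i) * (A ^ (N - i) * B ^ (N + i)) =
        (C (a i) * (A ^ (N - i) * B ^ (i - 1)) * C ((d ^ q) ^ δ)) * X ^ δ +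
          C (a i) * (A ^ (N - i) * B ^ (i - 1)) * C ((c ^ q) ^ δ) := by
      rw [hBsplit, hBδ]; ring
    have hdegg : (C (a i) * (A ^ (N - i) * B ^ (i - 1))).natDegree < N := by
      have h1 : (C (a i) * (A ^ (N - i) * B ^ (i - 1))).natDegree ≤ (N - i) + (i - 1) := by
        calc (C (a i) * (A ^ (N - i) * B ^ (i - 1))).natDegree
            ≤ (A ^ (N - i) * B ^ (i - 1)).natDegree := natDegree_C_mul_le _ _
          _ ≤ (A ^ (N - i)).natDegree + (B ^ (i - 1)).natDegree := natDegree_mul_le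
          _ ≤ (N - i) * A.natDegree + (i - 1) * B.natDegree :=
              Nat.add_le_add natDegree_pow_le natDegree_pow_le
          _ ≤ (N - i) * 1 + (i - 1) * 1 :=
              Nat.add_le_add (Nat.mul_le_mul_left _ natDegree_linear_le)
                (Nat.mul_le_mul_left _ natDegree_linear_le)
          _ = (N - i) + (i - 1) := by omega
      omega
    rw [hsplit, coeff_add, coeff_mul_X_pow', if_neg (by omega), coeff_mul_C,
      coeff_eq_zero_of_natDegree_lt hdegg, zero_mul, zero_add]
  refine ⟨fun k => P.coeff (N + k) + (P.coeff (N - k)) ^ q, ?_⟩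
  intro u hu
  simp only []
  have hu0 : u ≠ 0 := by
    intro h; rw [h, zero_pow (by omega : q + 1 ≠ 0)] at hu; exact zero_ne_one hu
  set Y := c * u + d with hY
  have hcu : Y ≠ 0 := by
    intro h
    have hd : d = -(c * u) := by rw [hY] at h; linear_combination h
    have hm1 : (-1 : K) ^ (q + 1) = 1 := by
      rcases hp.eq_two_or_odd' with h2 | hodd
      · have : (-1 : K) = 1 := by
          haveI : CharP K 2 := h2 ▸ hchar
          exact CharTwo.neg_eq 1
        rw [this, one_pow]
      · have hoq : Odd q := by rw [hq]; exact hodd.pow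
        exact (Even.neg_one_pow hoq.add_one)
    apply hcd
    have : d ^ (q + 1) = c ^ (q + 1) := by
      rw [hd, show -(c * u) = (-1) * (c * u) by ring, mul_pow, mul_pow, hu, hm1,
        one_mul, mul_one]
    rw [this]
  set w := u ^ q with hw
  have huw : w * u = 1 := by rw [hw, ← pow_succ, hu]
  have hwq : w ^ q = u := hpow u
  have huwpow : ∀ n : ℕ, u ^ n * w ^ n = 1 := by
    intro n; rw [← mul_pow, mul_comm u w, huw, one_pow]
  have hkey : d ^ q * u + c ^ q = u * Y ^ q := by
    have h1 : Y ^ q = c ^ q * w + d ^ q := by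
      rw [hY, frq, mul_pow, ← hw]
    rw [h1]
    have h2 : u * (c ^ q * w + d ^ q) = c ^ q * (w * u) + d ^ q * u := by ring
    rw [h2, huw, mul_one]; ring
  -- pointwise polynomial identity
  have hPT : u ^ N * (Y ^ ((q + 1) * N) *
      (∑ i ∈ Icc 1 N, a i * ((d ^ q * u + c ^ q) / Y) ^ i)) = P.eval u := by
    rw [hP, Finset.mul_sum, Finset.mul_sum, eval_finset_sum]
    apply Finset.sum_congr rfl
    intro i hi
    rw [Finset.mem_Icc] at hi
    rw [eval_mul, eval_mul, eval_pow, eval_pow, eval_C,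
      show eval u A = Y by rw [hA, hY]; simp,
      show eval u B = d ^ q * u + c ^ q by rw [hB]; simp]
    apply mul_right_cancel₀ (pow_ne_zero i hcu)
    have e1 : ((d ^ q * u + c ^ q) / Y) ^ i * Y ^ i = u ^ i * (Y ^ q) ^ i := by
      rw [← mul_pow, div_mul_cancel₀ _ hcu, hkey, mul_pow]
    have e2 : (d ^ q * u + c ^ q) ^ (N + i) = u ^ (N + i) * (Y ^ q) ^ (N + i) := by
      rw [hkey, mul_pow]
    have e3 : Y ^ (N - i) * Y ^ i = Y ^ N := by
      rw [← pow_add, Nat.sub_add_cancel hi.2]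
    have e4 : Y ^ ((q + 1) * N) = Y ^ N * (Y ^ q) ^ N := by
      rw [← pow_mul, ← pow_add]; congr 1; ring
    rw [e2]
    have e5 : a i * (Y ^ (N - i) * (u ^ (N + i) * (Y ^ q) ^ (N + i))) * Y ^ i =
        (Y ^ (N - i) * Y ^ i) * (a i * (u ^ (N + i) * (Y ^ q) ^ (N + i))) := by ring
    rw [e5, e3]
    calc u ^ N * (Y ^ ((q + 1) * N) * (a i * ((d ^ q * u + c ^ q) / Y) ^ i)) * Y ^ i
        = u ^ N * Y ^ ((q + 1) * N) * a i * (((d ^ q * u + c ^ q) / Y) ^ i * Y ^ i) := by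
          ring
      _ = u ^ N * Y ^ ((q + 1) * N) * a i * (u ^ i * (Y ^ q) ^ i) := by rw [e1]
      _ = Y ^ N * (a i * (u ^ (N + i) * (Y ^ q) ^ (N + i))) := by rw [e4]; ring
  -- Frobenius-invariance of Y^((q+1)*N)
  have hLq : (Y ^ (q + 1)) ^ q = Y ^ (q + 1) := by
    rw [pow_succ', mul_pow, hpow, mul_comm]
  have hLNq : (Y ^ ((q + 1) * N)) ^ q = Y ^ ((q + 1) * N) := by
    rw [pow_mul, pow_right_comm, hLq]
  set SS := ∑ i ∈ Icc 1 N, a i * ((d ^ q * u + c ^ q) / Y) ^ i with hSS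
  have hT2 : Y ^ ((q + 1) * N) * SS = w ^ N * P.eval u := by
    rw [← hPT, ← mul_assoc, ← mul_pow, huw, one_pow, one_mul]
  have hT2q : (Y ^ ((q + 1) * N) * SS) ^ q = u ^ N * (P.eval u) ^ q := by
    rw [hT2, mul_pow, pow_right_comm, hwq]
  have heval : P.eval u = ∑ j ∈ range (2 * N + 1), P.coeff j * u ^ j :=
    eval_eq_sum_range' (by omega) u
  have hevalq : (P.eval u) ^ q = ∑ j ∈ range (2 * N + 1), (P.coeff j) ^ q * w ^ j := by
    rw [heval, hsumq]
    apply Finset.sum_congr rfl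
    intro j _
    rw [mul_pow, pow_right_comm, ← hw]
  -- the right-hand side
  set b : ℕ → K := fun k => P.coeff (N + k) + (P.coeff (N - k)) ^ q with hb
  have hbq : ∀ k : ℕ, (b k) ^ q = (P.coeff (N + k)) ^ q + P.coeff (N - k) := by
    intro k; rw [hb]; simp only []; rw [frq, hpow]
  have hRq : (∑ k ∈ Icc 1 N, b k * u ^ k) ^ q = ∑ k ∈ Icc 1 N, (b k) ^ q * w ^ k := by
    rw [hsumq]
    apply Finset.sum_congr rfl
    intro k _
    rw [mul_pow, pow_right_comm, ← hw]
  -- main computation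
  set F : ℕ → K := fun j => P.coeff j * u ^ j * w ^ N + (P.coeff j) ^ q * w ^ j * u ^ N
    with hF
  have hA1 : ∀ k, k ≤ N → u ^ (N - k) * w ^ N = w ^ k := by
    intro k hk
    obtain ⟨l, hl⟩ : ∃ l, N = l + k := ⟨N - k, by omega⟩
    rw [hl, Nat.add_sub_cancel, pow_add, ← mul_assoc, huwpow l, one_mul]
  have hA2 : ∀ k, k ≤ N → w ^ (N - k) * u ^ N = u ^ k := by
    intro k hk
    obtain ⟨l, hl⟩ : ∃ l, N = l + k := ⟨N - k, by omega⟩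
    rw [hl, Nat.add_sub_cancel, pow_add, ← mul_assoc,
      show w ^ l * u ^ l = 1 by rw [← mul_pow, huw, one_pow], one_mul]
  have hA3 : ∀ k : ℕ, u ^ (N + k) * w ^ N = u ^ k := by
    intro k; rw [pow_add, mul_right_comm, huwpow N, one_mul]
  have hA4 : ∀ k : ℕ, w ^ (N + k) * u ^ N = w ^ k := by
    intro k
    rw [pow_add, mul_right_comm, show w ^ N * u ^ N = 1 by rw [← mul_pow, huw, one_pow],
      one_mul]
  calc Y ^ ((q + 1) * N) * (SS + SS ^ q)
      = (Y ^ ((q + 1) * N) * SS) + (Y ^ ((q + 1) * N) * SS) ^ q := by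
        rw [mul_pow, hLNq, mul_add]
    _ = w ^ N * P.eval u + u ^ N * (P.eval u) ^ q := by rw [hT2q, hT2]
    _ = ∑ j ∈ range (2 * N + 1), F j := by
        rw [hevalq, heval, Finset.mul_sum, Finset.mul_sum, ← Finset.sum_add_distrib]
        apply Finset.sum_congr rfl
        intro j _
        rw [hF]; ring
    _ = ∑ j ∈ range (N + (N + 1)), F j := by rw [show 2 * N + 1 = N + (N + 1) by omega]
    _ = (∑ j ∈ range N, F j) + ∑ j ∈ range (N + 1), F (N + j) :=
        Finset.sum_range_add F N (N + 1)
    _ = (∑ j ∈ range N, F (N - 1 - j)) + ((∑ j ∈ range N, F (N + (j + 1))) + F (N + 0)) := by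
        rw [Finset.sum_range_reflect, Finset.sum_range_succ']
    _ = (∑ j ∈ range N, F (N - (1 + j))) + (∑ j ∈ range N, F (N + (j + 1))) := by
        have hq0 : q ≠ 0 := by
          have : 1 ≤ p ^ m := Nat.one_le_pow m p hp.pos
          omega
        have : F (N + 0) = 0 := by
          rw [hF]; simp only [Nat.add_zero]
          rw [hcN, zero_pow hq0]; simp
        rw [this, add_zero]
        congr 1
        apply Finset.sum_congr rfl
        intro j _
        congr 1
        omega
    _ = ∑ j ∈ range N, (F (N - (1 + j)) + F (N + (j + 1))) :=
        Finset.sum_add_distrib.symm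
    _ = ∑ j ∈ range N, (b (1 + j) * u ^ (1 + j) + (b (1 + j)) ^ q * w ^ (1 + j)) := by
        apply Finset.sum_congr rfl
        intro j hj
        rw [Finset.mem_range] at hj
        have hk1 : 1 ≤ 1 + j := by omega
        have hkN : 1 + j ≤ N := by omega
        have h1 := hA1 (1 + j) hkN
        have h2 := hA2 (1 + j) hkN
        have h3 := hA3 (1 + j)
        have h4 := hA4 (1 + j)
        have hexp : N + (j + 1) = N + (1 + j) := by omega
        rw [hexp, hF]
        simp only []
        calc P.coeff (N - (1 + j)) * u ^ (N - (1 + j)) * w ^ N +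
              (P.coeff (N - (1 + j))) ^ q * w ^ (N - (1 + j)) * u ^ N +
              (P.coeff (N + (1 + j)) * u ^ (N + (1 + j)) * w ^ N +
                (P.coeff (N + (1 + j))) ^ q * w ^ (N + (1 + j)) * u ^ N)
            = P.coeff (N - (1 + j)) * (u ^ (N - (1 + j)) * w ^ N) +
              (P.coeff (N - (1 + j))) ^ q * (w ^ (N - (1 + j)) * u ^ N) +
              (P.coeff (N + (1 + j)) * (u ^ (N + (1 + j)) * w ^ N) +
                (P.coeff (N + (1 + j))) ^ q * (w ^ (N + (1 + j)) * u ^ N)) := by ring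
          _ = P.coeff (N - (1 + j)) * w ^ (1 + j) +
              (P.coeff (N - (1 + j))) ^ q * u ^ (1 + j) +
              (P.coeff (N + (1 + j)) * u ^ (1 + j) +
                (P.coeff (N + (1 + j))) ^ q * w ^ (1 + j)) := by
              rw [h1, h2, h3, h4]
          _ = b (1 + j) * u ^ (1 + j) + (b (1 + j)) ^ q * w ^ (1 + j) := by
              rw [hb, hbq]; simp only []; ring
    _ = (∑ k ∈ Icc 1 N, b k * u ^ k) + ∑ k ∈ Icc 1 N, (b k) ^ q * w ^ k := by
        rw [← Finset.sum_add_distrib]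
        rw [show Icc 1 N = Ico 1 (N + 1) by rw [Finset.Ico_add_one_right_eq_Icc],
          Finset.sum_Ico_eq_sum_range]
        simp only [Nat.add_sub_cancel]
    _ = (∑ k ∈ Icc 1 N, b k * u ^ k) + (∑ k ∈ Icc 1 N, b k * u ^ k) ^ q := by rw [hRq]
end

section
/- Let p be a prime and m ≥ 1. If C is a linear code over GF(p^h) of length p^m + 1 that is invariant under the permutation action of PGL(2, p^m) on its coordinates (identified with the projective line PG(1, p^m)), then C is one of: the zero code, the full space GF(p^h)^{p^m+1}, the repetition code {(c, c, ..., c) : c ∈ GF(p^h)}, or the sum-zero code {(c₀, ..., c_{p^m}) : c₀ + ... + c_{p^m} = 0}. -/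
open scoped LinearAlgebra.Projectivization
open Projectivization

/-- The action of an invertible matrix on the projective line. -/
noncomputable def pact {F : Type*} [Field F] (g : GL (Fin 2) F) :
    ℙ F (Fin 2 → F) → ℙ F (Fin 2 → F) :=
  Projectivization.map
    (((Matrix.GeneralLinearGroup.toLin g).toLinearEquiv :
        (Fin 2 → F) ≃ₗ[F] (Fin 2 → F)) : (Fin 2 → F) →ₗ[F] (Fin 2 → F))
    (Matrix.GeneralLinearGroup.toLin g).toLinearEquiv.injective

instance projLineFinite (F : Type*) [Field F] [Fintype F] :
    Finite (ℙ F (Fin 2 → F)) := by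
  unfold Projectivization; infer_instance

/-- The sum-zero code: all vectors whose coordinates sum to zero. -/
noncomputable def sumZeroCode (E X : Type*) [Field E] [Finite X] : Submodule E (X → E) :=
  letI : Fintype X := Fintype.ofFinite X
  LinearMap.ker (∑ x : X, (LinearMap.proj x : (X → E) →ₗ[E] E))

/-- The repetition code. -/
def repCode (E X : Type*) [Field E] : Submodule E (X → E) :=
  Submodule.span E {fun _ => (1 : E)}

/-!
Averaging a codeword `c` over the translations `x ↦ x + a`, which fix `∞` and permute the `q`
affine points regularly, gives `(∑ c - c ∞) • (1 - e_∞)`, because `q = 0` in `E`. So a code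
containing a non-constant word contains `1 - e_∞`, hence by transitivity every `1 - e_x`; these
span the sum-zero code, which is a hyperplane. Otherwise the code lies in the repetition code,
which is a line.
-/

open MulAction OnePoint Matrix.GeneralLinearGroup

section Codes

variable {E X : Type*} [Field E]

theorem mem_sumZeroCode [Fintype X] {f : X → E} : f ∈ sumZeroCode E X ↔ ∑ x, f x = 0 := by
  simp only [sumZeroCode, LinearMap.mem_ker, LinearMap.sum_apply, LinearMap.proj_apply]
  convert Iff.rfl

theorem mem_repCode {f : X → E} : f ∈ repCode E X ↔ ∃ a : E, (fun _ => a) = f := by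
  simp only [repCode, Submodule.mem_span_singleton]
  refine exists_congr fun a => ?_
  rw [show a • (fun _ => (1 : E)) = fun _ : X => a by funext; simp]

theorem isAtom_repCode [Nonempty X] : IsAtom (repCode E X) :=
  nonzero_span_atom _ one_ne_zero

theorem isCoatom_sumZeroCode [Finite X] [Nonempty X] : IsCoatom (sumZeroCode E X) := by
  classical
  let := Fintype.ofFinite X
  obtain ⟨x⟩ := ‹Nonempty X›
  refine LinearMap.isCoatom_ker_of_surjective fun a => ⟨Pi.single x a, ?_⟩
  simp [LinearMap.sum_apply]

theorem sumZeroCode_le_of_one_sub_single_mem [Fintype X] [DecidableEq X]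
    {C : Submodule E (X → E)} (hC : ∀ x, (1 - Pi.single x 1 : X → E) ∈ C) :
    sumZeroCode E X ≤ C := by
  intro f hf
  rw [mem_sumZeroCode] at hf
  have hf_eq : f = ∑ x, (-f x) • (1 - Pi.single x 1 : X → E) := by
    funext y
    simp [Finset.sum_apply, Pi.single_apply, mul_sub, hf]
  rw [hf_eq]
  exact C.sum_mem fun x _ => C.smul_mem _ (hC x)

end Codes

section InvariantCodes

variable {E X G : Type*} [Field E] [Group G] [MulAction G X]

variable (G) in
def IsInvariantCode (C : Submodule E (X → E)) : Prop :=
  ∀ g : G, ∀ c ∈ C, (fun x => c (g • x)) ∈ C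

/-- Modelled on the translations `x ↦ x + a`, which fix `∞` and act regularly on the affine line. -/
structure IsRegularOffPoint {A : Type*} (τ : A → G) (x₀ : X) : Prop where
  smul_eq_self : ∀ a, τ a • x₀ = x₀
  existsUnique_smul_eq : ∀ y ≠ x₀, ∀ z ≠ x₀, ∃! a, τ a • y = z

variable {C : Submodule E (X → E)}

theorem IsInvariantCode.one_sub_single_smul_mem [DecidableEq X] (hC : IsInvariantCode G C)
    {x : X} (hx : (1 - Pi.single x 1 : X → E) ∈ C) (g : G) :
    (1 - Pi.single (g • x) 1 : X → E) ∈ C := by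
  convert hC g⁻¹ _ hx using 1
  funext y
  simp only [Pi.sub_apply, Pi.one_apply, Pi.single_apply, inv_smul_eq_iff]

variable [Fintype X] {A : Type*} [Fintype A] {τ : A → G} {x₀ : X}

theorem IsRegularOffPoint.sum_apply_smul (hτ : IsRegularOffPoint τ x₀) (c : X → E) {y : X}
    (hy : y ≠ x₀) : ∑ a, c (τ a • y) = ∑ x, c x - c x₀ := by
  classical
  have hne : ∀ a, τ a • y ≠ x₀ := fun a h =>
    hy (smul_left_cancel _ (h.trans (hτ.smul_eq_self a).symm))
  rw [← Finset.sum_erase_eq_sub (Finset.mem_univ x₀)]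
  refine Finset.sum_bij (fun a _ => τ a • y) (fun a _ => Finset.mem_erase.mpr ⟨hne a, by simp⟩)
    (fun a _ b _ hab => ?_) (fun z hz => ?_) fun _ _ => rfl
  · exact (hτ.existsUnique_smul_eq y hy _ (hne a)).unique rfl hab.symm
  · obtain ⟨a, ha, -⟩ := hτ.existsUnique_smul_eq y hy z (Finset.ne_of_mem_erase hz)
    exact ⟨a, Finset.mem_univ a, ha⟩

theorem IsRegularOffPoint.sum_translates [DecidableEq X] (hτ : IsRegularOffPoint τ x₀)
    (hA : (Fintype.card A : E) = 0) (c : X → E) :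
    ∑ a, (fun x => c (τ a • x)) = (∑ x, c x - c x₀) • (1 - Pi.single x₀ 1 : X → E) := by
  funext y
  rw [Finset.sum_apply]
  by_cases hy : y = x₀
  · subst hy
    simp [hτ.smul_eq_self, hA]
  · simp [hτ.sum_apply_smul c hy, hy]

theorem IsInvariantCode.one_sub_single_mem [DecidableEq X] [IsPretransitive G X]
    (hC : IsInvariantCode G C) (hτ : IsRegularOffPoint τ x₀) (hA : (Fintype.card A : E) = 0)
    {c : X → E} (hc : c ∈ C) {x : X} (hx : c x ≠ c x₀) :
    (1 - Pi.single x₀ 1 : X → E) ∈ C := by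
  have of_sum_sub_ne : ∀ c ∈ C, ∑ x, c x - c x₀ ≠ 0 → (1 - Pi.single x₀ 1 : X → E) ∈ C := by
    intro c hc hs
    have hmem := C.sum_mem fun a (_ : a ∈ Finset.univ) => hC (τ a) c hc
    rw [hτ.sum_translates hA c] at hmem
    simpa [smul_smul, inv_mul_cancel₀ hs] using C.smul_mem (∑ x, c x - c x₀)⁻¹ hmem
  by_cases hs : ∑ x, c x - c x₀ = 0
  · obtain ⟨g, rfl⟩ := exists_smul_eq G x₀ x
    refine of_sum_sub_ne _ (hC g c hc) ?_
    rw [show ∑ y, c (g • y) = ∑ y, c y from Equiv.sum_comp (MulAction.toPerm g) c,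
      sub_eq_zero.mp hs]
    exact sub_ne_zero.mpr hx.symm
  · exact of_sum_sub_ne c hc hs

theorem IsInvariantCode.le_repCode_or_sumZeroCode_le [IsPretransitive G X]
    (hC : IsInvariantCode G C) (hτ : IsRegularOffPoint τ x₀) (hA : (Fintype.card A : E) = 0) :
    C ≤ repCode E X ∨ sumZeroCode E X ≤ C := by
  classical
  by_cases hconst : ∀ c ∈ C, ∀ x, c x = c x₀
  · exact Or.inl fun c hc => mem_repCode.mpr ⟨c x₀, funext fun x => (hconst c hc x).symm⟩
  · push Not at hconst
    obtain ⟨c, hc, x, hx⟩ := hconst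
    have h₀ := hC.one_sub_single_mem hτ hA hc hx
    refine Or.inr (sumZeroCode_le_of_one_sub_single_mem fun y => ?_)
    obtain ⟨g, rfl⟩ := exists_smul_eq G x₀ y
    exact hC.one_sub_single_smul_mem h₀ g

theorem IsInvariantCode.eq_bot_or_eq_top_or_eq_repCode_or_eq_sumZeroCode [IsPretransitive G X]
    (hC : IsInvariantCode G C) (hτ : IsRegularOffPoint τ x₀) (hA : (Fintype.card A : E) = 0) :
    C = ⊥ ∨ C = ⊤ ∨ C = repCode E X ∨ C = sumZeroCode E X := by
  have : Nonempty X := ⟨x₀⟩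
  rcases hC.le_repCode_or_sumZeroCode_le hτ hA with h | h
  · rcases isAtom_repCode.le_iff.mp h with h | h
    exacts [Or.inl h, Or.inr (Or.inr (Or.inl h))]
  · rcases isCoatom_sumZeroCode.le_iff.mp h with h | h
    exacts [Or.inr (Or.inl h), Or.inr (Or.inr (Or.inr h))]

end InvariantCodes

section ProjectiveLine

variable {F : Type*} [Field F]

theorem pact_eq_smul (g : GL (Fin 2) F) (x : ℙ F (Fin 2 → F)) : pact g x = g • x := rfl

instance : IsPretransitive (GL (Fin 2) F) (ℙ F (Fin 2 → F)) := by
  let f : ℙ F (Fin 2 → F) →ₑ[Matrix.SpecialLinearGroup.toGL (n := Fin 2) (R := F)]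
      ℙ F (Fin 2 → F) :=
    { toFun := id
      map_smul' := fun g x => by
        induction x using Projectivization.ind with
        | h v hv => rfl }
  have := IsPretransitive.of_embedding (n := Fin 2) (f := f) Function.surjective_id
  exact isPretransitive_of_is_two_pretransitive

variable [DecidableEq F]

theorem upperRightHom_smul_coe (a t : F) :
    upperRightHom a • (t : OnePoint F) = ((t + a : F) : OnePoint F) := by
  simp [smul_some_eq_ite, add_comm]

theorem exists_equivProjectivization_coe_eq {y : ℙ F (Fin 2 → F)}
    (hy : y ≠ equivProjectivization F ∞) : ∃ b : F, equivProjectivization F b = y := by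
  obtain ⟨y, rfl⟩ := (equivProjectivization F).surjective y
  induction y using OnePoint.rec with
  | infty => exact absurd rfl hy
  | coe b => exact ⟨b, rfl⟩

theorem isRegularOffPoint_upperRightHom :
    IsRegularOffPoint (X := ℙ F (Fin 2 → F)) (upperRightHom (R := F) ·)
      (equivProjectivization F ∞) where
  smul_eq_self a := by
    rw [← equivProjectivization_smul, smul_infty_eq_self_iff.mpr (by simp)]
  existsUnique_smul_eq y hy z hz := by
    obtain ⟨b, rfl⟩ := exists_equivProjectivization_coe_eq hy
    obtain ⟨c, rfl⟩ := exists_equivProjectivization_coe_eq hz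
    simp only [← equivProjectivization_smul, upperRightHom_smul_coe, EmbeddingLike.apply_eq_iff_eq,
      OnePoint.coe_eq_coe]
    exact ⟨c - b, by ring, fun a ha => by rw [← ha]; ring⟩

end ProjectiveLine

theorem stmt_17_general (p m h : ℕ) (hm : 1 ≤ m) (hh : 1 ≤ h)
    (F E : Type*) [Field F] [Fintype F] [Field E] [Fintype E]
    (hF : Fintype.card F = p ^ m) (hE : Fintype.card E = p ^ h)
    (C : Submodule E (ℙ F (Fin 2 → F) → E))
    (hinv : ∀ g : GL (Fin 2) F, ∀ c ∈ C, (fun x => c (pact g x)) ∈ C) :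
    C = ⊥ ∨ C = ⊤ ∨ C = repCode E (ℙ F (Fin 2 → F)) ∨
      C = sumZeroCode E (ℙ F (Fin 2 → F)) := by
  classical
  let := Fintype.ofFinite (ℙ F (Fin 2 → F))
  have hp : (p : E) = 0 := by
    have hE0 := FiniteField.cast_card_eq_zero E
    rw [hE, Nat.cast_pow] at hE0
    exact pow_eq_zero_iff (by omega) |>.mp hE0
  have hF0 : (Fintype.card F : E) = 0 := by
    rw [hF, Nat.cast_pow, hp, zero_pow (by omega)]
  have hC : IsInvariantCode (GL (Fin 2) F) C := fun g => by
    simpa only [pact_eq_smul] using hinv g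
  exact hC.eq_bot_or_eq_top_or_eq_repCode_or_eq_sumZeroCode isRegularOffPoint_upperRightHom hF0

theorem stmt_17 (p m h : ℕ) (hp : p.Prime) (hm : 1 ≤ m) (hh : 1 ≤ h)
    (F E : Type*) [Field F] [Fintype F] [Field E] [Fintype E]
    (hF : Fintype.card F = p ^ m) (hE : Fintype.card E = p ^ h)
    (C : Submodule E (ℙ F (Fin 2 → F) → E))
    (hinv : ∀ g : GL (Fin 2) F, ∀ c ∈ C, (fun x => c (pact g x)) ∈ C) :
    C = ⊥ ∨ C = ⊤ ∨ C = repCode E (ℙ F (Fin 2 → F)) ∨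
      C = sumZeroCode E (ℙ F (Fin 2 → F)) :=
  stmt_17_general p m h hm hh F E hF hE C hinv
end

section
/- Let p be a prime, m ≥ 1, and let B be a nonempty collection of k-subsets of PG(1, p^m) with 1 ≤ k ≤ p^m, invariant under the action of PGL(2, p^m). Then the p-rank of the incidence matrix of the incidence structure (PG(1, p^m), B) equals p^m if p divides k, and p^m + 1 otherwise. -/
open scoped LinearAlgebra.Projectivization
open Projectivization

noncomputable instance (F : Type*) [Field F] : DecidableEq (ℙ F (Fin 2 → F)) :=
  Classical.decEq _

/-- The `p`-rank of an incidence structure: the rank over `GF(p)` of the span of the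
characteristic vectors of the blocks (i.e. the rows of the incidence matrix). -/
noncomputable def pRank (p : ℕ) {X : Type*} (B : Set (Finset X)) : ℕ :=
  letI : DecidableEq X := Classical.decEq X
  Module.finrank (ZMod p) ↥(Submodule.span (ZMod p)
    ((fun b : Finset X => fun x : X => if x ∈ b then (1 : ZMod p) else 0) '' B))

/-!
Let `V` be the space of `𝔽_p`-valued functions on the `q + 1` points of the projective line
and `σ : V → 𝔽_p` the sum of values. The span `W` of the block vectors is `GL(2, q)`-invariant,
and `W ∩ ker σ ≠ 0`: moving a block by a group element changes its vector but not its sum.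
The translations `x ↦ x + t` form a `p`-group, so they fix a nonzero vector of `W ∩ ker σ`.
Such a vector is constant off `∞`, and its sum is its value at `∞` because `q ≡ 0 (mod p)`;
hence it is a multiple of `1 - δ_∞`. By transitivity every `1 - δ_x` lies in `W`, and these
span the hyperplane `ker σ`. So `W = ker σ`, of dimension `q`, if `p ∣ k`, and otherwise
`W = V`, of dimension `q + 1`, because then a block vector has nonzero sum.
-/

open Module Submodule MulAction

def incidenceVec (K : Type*) {X : Type*} [Zero K] [One K] [DecidableEq X] (b : Finset X) :
    X → K :=
  fun x => if x ∈ b then 1 else 0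

section PermutationModule

variable {K X : Type*} [Ring K] [Fintype X]

variable (K X) in
def sumLinear : (X → K) →ₗ[K] K where
  toFun f := ∑ x, f x
  map_add' _ _ := Finset.sum_add_distrib
  map_smul' _ _ := (Finset.mul_sum ..).symm

theorem sumLinear_apply (f : X → K) : sumLinear K X f = ∑ x, f x := rfl

variable [DecidableEq X]

theorem sumLinear_ne_zero [Nontrivial K] [Nonempty X] : sumLinear K X ≠ 0 := by
  obtain ⟨x⟩ := ‹Nonempty X›
  intro h
  simpa [sumLinear_apply] using LinearMap.congr_fun h (Pi.single x 1)

theorem ker_sumLinear_le_span :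
    LinearMap.ker (sumLinear K X) ≤ span K (Set.range fun y : X => 1 - Pi.single y 1) := by
  intro f hf
  -- `∑_y f y • (1 - δ_y) = (∑_y f y) • 1 - f = -f`
  have hf' : f = -∑ y, f y • (1 - Pi.single y (1 : K)) := by
    have hsum : ∑ y, f y = 0 := hf
    ext x
    simp [Finset.sum_apply, mul_sub, Finset.sum_sub_distrib, hsum, Pi.single_apply]
  rw [hf']
  exact neg_mem (sum_mem fun y _ => smul_mem _ _ (subset_span ⟨y, rfl⟩))

theorem sumLinear_incidenceVec (b : Finset X) : sumLinear K X (incidenceVec K b) = b.card := by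
  simp [sumLinear_apply, incidenceVec, Finset.sum_ite_mem]

end PermutationModule

section Invariance

variable {K X G : Type*} [Ring K] [Group G] [MulAction G X]

variable (G) in
def IsPermInvariant (U : Submodule K (X → K)) : Prop :=
  ∀ f ∈ U, ∀ g : G, (fun x => f (g • x)) ∈ U

theorem IsPermInvariant.inf {U V : Submodule K (X → K)} (hU : IsPermInvariant G U)
    (hV : IsPermInvariant G V) : IsPermInvariant G (U ⊓ V) :=
  fun f hf g => ⟨hU f hf.1 g, hV f hf.2 g⟩

theorem IsPermInvariant.to_subgroup {U : Submodule K (X → K)} (hU : IsPermInvariant G U)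
    (P : Subgroup G) : IsPermInvariant P U :=
  fun f hf t => hU f hf t

theorem isPermInvariant_ker_sumLinear [Fintype X] :
    IsPermInvariant G (LinearMap.ker (sumLinear K X)) := by
  intro f hf g
  rw [LinearMap.mem_ker, sumLinear_apply,
    Fintype.sum_bijective (g • ·) (MulAction.bijective g) _ f fun _ => rfl]
  exact hf

variable [DecidableEq X]

theorem incidenceVec_comp_smul (g : G) (b : Finset X) :
    (fun x => incidenceVec K b (g • x)) = incidenceVec K (b.image (g⁻¹ • ·)) := by
  ext x
  simp [incidenceVec, Finset.mem_image, inv_smul_eq_iff]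

theorem isPermInvariant_span_incidenceVec {B : Set (Finset X)}
    (hB : ∀ b ∈ B, ∀ g : G, b.image (g • ·) ∈ B) :
    IsPermInvariant G (span K (incidenceVec K '' B)) := by
  intro f hf g
  induction hf using span_induction with
  | mem f hf =>
    obtain ⟨b, hb, rfl⟩ := hf
    rw [incidenceVec_comp_smul]
    exact subset_span ⟨_, hB b hb g⁻¹, rfl⟩
  | zero => exact zero_mem _
  | add f₁ f₂ _ _ h₁ h₂ => exact add_mem h₁ h₂
  | smul c f _ h => exact smul_mem _ c h

end Invariance

theorem IsPGroup.exists_mem_ne_zero_forall_apply_smul_eq {p : ℕ} [Fact p.Prime] {H X : Type*}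
    [Group H] [MulAction H X] [Finite X] (hH : IsPGroup p H) {U : Submodule (ZMod p) (X → ZMod p)}
    (hU : IsPermInvariant H U) (hne : U ≠ ⊥) :
    ∃ f ∈ U, f ≠ 0 ∧ ∀ (h : H) x, f (h • x) = f x := by
  let _ := arrowAction (G := H) (A := X) (B := ZMod p)
  let S : SubMulAction H (X → ZMod p) :=
    { carrier := U
      smul_mem' := fun h f hf => hU f hf h⁻¹ }
  have hcard : p ∣ Nat.card S := by
    have : Nontrivial U := nontrivial_iff_ne_bot.2 hne
    change p ∣ Nat.card U
    rw [Module.natCard_eq_pow_finrank (K := ZMod p), Nat.card_zmod]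
    exact dvd_pow_self p Module.finrank_pos.ne'
  -- The fixed points of `H` on `U` number `≡ |U| ≡ 0 (mod p)`, and `0` is one of them.
  obtain ⟨f, hfix, hf0⟩ := hH.exists_fixed_point_of_prime_dvd_card_of_fixed_point S hcard
    (a := ⟨0, U.zero_mem⟩) fun h => Subtype.ext (funext fun _ => rfl)
  refine ⟨f, f.2, fun h => hf0 (Subtype.ext h.symm), fun h x => ?_⟩
  rw [← inv_inv h]
  exact congrFun (congrArg Subtype.val (hfix h⁻¹)) x

section TransitiveOffPoint

variable {p n : ℕ} [Fact p.Prime] {X : Type*} [Fintype X] [DecidableEq X] {x₀ : X}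

theorem apply_eq_zero_of_forall_apply_smul_eq {H : Type*} [Group H] [MulAction H X]
    (htrans : ∀ x y, x ≠ x₀ → y ≠ x₀ → ∃ t : H, t • x = y)
    (hX : Fintype.card X = n + 1) (hn : p ∣ n) {f : X → ZMod p}
    (hf : ∀ (t : H) x, f (t • x) = f x) (hσ : sumLinear (ZMod p) X f = 0) : f x₀ = 0 := by
  have hrest : ∑ x ∈ {x₀}ᶜ, f x = 0 := by
    rcases ({x₀}ᶜ : Finset X).eq_empty_or_nonempty with h | ⟨y, hy⟩
    · simp [h]
    · have hconst : ∀ x ∈ ({x₀}ᶜ : Finset X), f x = f y := fun x hx => by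
        obtain ⟨t, rfl⟩ := htrans y x (by simpa using hy) (by simpa using hx)
        exact hf t y
      rw [Finset.sum_congr rfl hconst, Finset.sum_const, Finset.card_compl,
        Finset.card_singleton, hX, Nat.add_sub_cancel, nsmul_eq_mul,
        (ZMod.natCast_eq_zero_iff n p).2 hn, zero_mul]
  rwa [sumLinear_apply, Fintype.sum_eq_add_sum_compl x₀, hrest, add_zero] at hσ

theorem one_sub_single_mem_of_isPGroup {H : Type*} [Group H] [MulAction H X]
    (hH : IsPGroup p H) (htrans : ∀ x y, x ≠ x₀ → y ≠ x₀ → ∃ t : H, t • x = y)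
    (hX : Fintype.card X = n + 1) (hn : p ∣ n) {U : Submodule (ZMod p) (X → ZMod p)}
    (hU : IsPermInvariant H U) (hUσ : U ≤ LinearMap.ker (sumLinear (ZMod p) X))
    (hne : U ≠ ⊥) : 1 - Pi.single x₀ 1 ∈ U := by
  obtain ⟨f, hfU, hf0, hfix⟩ := hH.exists_mem_ne_zero_forall_apply_smul_eq hU hne
  have hx₀ : f x₀ = 0 := apply_eq_zero_of_forall_apply_smul_eq htrans hX hn hfix (hUσ hfU)
  obtain ⟨y, hy⟩ := Function.ne_iff.1 hf0
  have hyx₀ : y ≠ x₀ := by rintro rfl; exact hy hx₀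
  have hf : (f y)⁻¹ • f = 1 - Pi.single x₀ 1 := by
    ext x
    by_cases hx : x = x₀
    · simp [hx, hx₀]
    · obtain ⟨t, rfl⟩ := htrans y x hyx₀ hx
      simp [hx, hfix, inv_mul_cancel₀ hy]
  exact hf ▸ U.smul_mem _ hfU

theorem ker_sumLinear_le_of_isPermInvariant {G : Type*} [Group G] [MulAction G X]
    [IsPretransitive G X] (P : Subgroup G) (hP : IsPGroup p P)
    (htrans : ∀ x y, x ≠ x₀ → y ≠ x₀ → ∃ t : P, t • x = y)
    (hX : Fintype.card X = n + 1) (hn : p ∣ n) {U : Submodule (ZMod p) (X → ZMod p)}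
    (hU : IsPermInvariant G U) (hne : U ⊓ LinearMap.ker (sumLinear (ZMod p) X) ≠ ⊥) :
    LinearMap.ker (sumLinear (ZMod p) X) ≤ U := by
  have h₀ : 1 - Pi.single x₀ 1 ∈ U :=
    (one_sub_single_mem_of_isPGroup hP htrans hX hn
      ((hU.inf isPermInvariant_ker_sumLinear).to_subgroup P) inf_le_right hne).1
  refine ker_sumLinear_le_span.trans (span_le.2 ?_)
  rintro _ ⟨y, rfl⟩
  obtain ⟨g, rfl⟩ := exists_smul_eq G y x₀
  rw [SetLike.mem_coe]
  convert hU _ h₀ g using 1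
  funext x
  simp [Pi.single_apply]

end TransitiveOffPoint

theorem span_incidenceVec_inf_ker_ne_bot {K X G : Type*} [Ring K] [Nontrivial K] [Fintype X]
    [DecidableEq X] [Group G] [MulAction G X] [IsPretransitive G X] {B : Set (Finset X)}
    (hB : ∀ b ∈ B, ∀ g : G, b.image (g • ·) ∈ B) {b : Finset X} (hb : b ∈ B) {x y : X}
    (hx : x ∈ b) (hy : y ∉ b) :
    span K (incidenceVec K '' B) ⊓ LinearMap.ker (sumLinear K X) ≠ ⊥ := by
  obtain ⟨g, rfl⟩ := exists_smul_eq G x y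
  set gb := b.image (g • ·)
  have hmem : incidenceVec K gb - incidenceVec K b ∈ span K (incidenceVec K '' B) :=
    sub_mem (subset_span ⟨gb, hB b hb g, rfl⟩) (subset_span ⟨b, hb, rfl⟩)
  have hσ : sumLinear K X (incidenceVec K gb - incidenceVec K b) = 0 := by
    rw [map_sub, sumLinear_incidenceVec, sumLinear_incidenceVec,
      Finset.card_image_of_injective _ (MulAction.injective g), sub_self]
  have hgx : g • x ∈ gb := Finset.mem_image_of_mem _ hx
  refine (Submodule.ne_bot_iff _).2 ⟨_, ⟨hmem, hσ⟩, fun h => ?_⟩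
  simpa [incidenceVec, hgx, hy] using congrFun h (g • x)

theorem pRank_eq_finrank_span {X : Type*} [DecidableEq X] (p : ℕ) (B : Set (Finset X)) :
    pRank p B = finrank (ZMod p) (span (ZMod p) (incidenceVec (ZMod p) '' B)) := by
  unfold pRank incidenceVec
  congr!

theorem pRank_eq_of_isPGroup {p n k : ℕ} [Fact p.Prime] {G X : Type*} [Group G]
    [MulAction G X] [Fintype X] [DecidableEq X] [IsPretransitive G X] (P : Subgroup G)
    (hP : IsPGroup p P) {x₀ : X} (htrans : ∀ x y, x ≠ x₀ → y ≠ x₀ → ∃ t : P, t • x = y)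
    (hX : Fintype.card X = n + 1) (hn : p ∣ n) {B : Set (Finset X)}
    (hB : ∀ b ∈ B, ∀ g : G, b.image (g • ·) ∈ B) (hne : B.Nonempty)
    (hcard : ∀ b ∈ B, b.card = k) (hk : 1 ≤ k) (hkn : k ≤ n) :
    pRank p B = if p ∣ k then n else n + 1 := by
  rw [pRank_eq_finrank_span]
  set W := span (ZMod p) (incidenceVec (ZMod p) '' B)
  set σ := sumLinear (ZMod p) X
  obtain ⟨b, hb⟩ := hne
  obtain ⟨x, hx⟩ : b.Nonempty := Finset.card_pos.1 (hcard b hb ▸ hk)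
  obtain ⟨y, -, hy⟩ := Finset.exists_mem_notMem_of_card_lt_card
    (s := b) (t := Finset.univ) (by rw [Finset.card_univ, hX, hcard b hb]; omega)
  have : Nonempty X := ⟨x⟩
  have hker : LinearMap.ker σ ≤ W := ker_sumLinear_le_of_isPermInvariant P hP htrans hX hn
    (isPermInvariant_span_incidenceVec hB) (span_incidenceVec_inf_ker_ne_bot hB hb hx hy)
  have hdim : finrank (ZMod p) (LinearMap.ker σ) + 1 = n + 1 := by
    rw [Module.Dual.finrank_ker_add_one_of_ne_zero sumLinear_ne_zero,
      Module.finrank_fintype_fun_eq_card, hX]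
  have hσ : ∀ b ∈ B, σ (incidenceVec (ZMod p) b) = k := fun b hb => by
    rw [sumLinear_incidenceVec, hcard b hb]
  split_ifs with hpk
  · have hW : W = LinearMap.ker σ := by
      refine le_antisymm (span_le.2 ?_) hker
      rintro _ ⟨b', hb', rfl⟩
      exact (hσ b' hb').trans ((ZMod.natCast_eq_zero_iff k p).2 hpk)
    rw [hW]
    omega
  · have hlt : LinearMap.ker σ < W := by
      refine hker.lt_of_ne fun h => hpk ((ZMod.natCast_eq_zero_iff k p).1 ?_)
      exact (hσ b hb).symm.trans (h ▸ subset_span ⟨b, hb, rfl⟩ : _ ∈ LinearMap.ker σ)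
    have hcoatom := LinearMap.isCoatom_ker_of_surjective (f := σ)
      (LinearMap.surjective sumLinear_ne_zero)
    rw [hcoatom.lt_iff.1 hlt, finrank_top, Module.finrank_fintype_fun_eq_card, hX]

section ProjectiveLine

open OnePoint Matrix.GeneralLinearGroup

variable {F : Type*} [Field F]

instance inst_s18 : IsPretransitive (GL (Fin 2) F) (ℙ F (Fin 2 → F)) := by
  have := isPretransitive_of_is_two_pretransitive
    (G := LinearMap.GeneralLinearGroup F (Fin 2 → F)) (α := ℙ F (Fin 2 → F))
  let f : ℙ F (Fin 2 → F) →ₑ[toLin] ℙ F (Fin 2 → F) :=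
    { toFun := id
      map_smul' := fun (g : GL (Fin 2) F) (x : ℙ F (Fin 2 → F)) =>
        show g • x = toLin g • x from rfl }
  exact (isPretransitive_congr toLin.surjective Function.bijective_id (f := f)).2 this

variable (F) in
def translations : Subgroup (GL (Fin 2) F) := (upperRightHom (R := F)).toMonoidHom.range

theorem isPGroup_translations [Fintype F] {p m : ℕ} (hF : Fintype.card F = p ^ m) :
    IsPGroup p (translations F) := by
  have hcard : Nat.card (Multiplicative F) = p ^ m := by
    rw [Nat.card_congr Multiplicative.toAdd, Nat.card_eq_fintype_card, hF]
  exact (IsPGroup.of_card hcard).of_surjective _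
    (upperRightHom (R := F)).toMonoidHom.rangeRestrict_surjective

theorem exists_equivProjectivization_coe [DecidableEq F] {x : ℙ F (Fin 2 → F)}
    (hx : x ≠ equivProjectivization F ∞) : ∃ u : F, equivProjectivization F u = x := by
  obtain ⟨a, rfl⟩ := (equivProjectivization F).surjective x
  exact (ne_infty_iff_exists.1 (ne_of_apply_ne _ hx)).imp fun _ => congrArg _

theorem exists_translation_smul_eq [DecidableEq F] {x y : ℙ F (Fin 2 → F)}
    (hx : x ≠ equivProjectivization F ∞) (hy : y ≠ equivProjectivization F ∞) :
    ∃ t : translations F, t • x = y := by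
  obtain ⟨u, rfl⟩ := exists_equivProjectivization_coe hx
  obtain ⟨v, rfl⟩ := exists_equivProjectivization_coe hy
  refine ⟨⟨upperRightHom (v - u), v - u, rfl⟩, ?_⟩
  rw [Subgroup.smul_def, ← equivProjectivization_smul, smul_some_eq_ite]
  simp

theorem card_projectiveLine [Fintype F] [Fintype (ℙ F (Fin 2 → F))] :
    Fintype.card (ℙ F (Fin 2 → F)) = Fintype.card F + 1 := by
  simp_rw [← Nat.card_eq_fintype_card]
  exact card_of_finrank_two F _ (Module.finrank_fin_fun F)

end ProjectiveLine

theorem stmt_18 (p m k : ℕ) (hp : p.Prime) (hm : 1 ≤ m) (hk1 : 1 ≤ k)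
    (hk2 : k ≤ p ^ m) (F : Type*) [Field F] [Fintype F] (hF : Fintype.card F = p ^ m)
    (B : Set (Finset (ℙ F (Fin 2 → F)))) (hne : B.Nonempty)
    (hcard : ∀ b ∈ B, b.card = k)
    (hinv : ∀ b ∈ B, ∀ g : GL (Fin 2) F, b.image (pact g) ∈ B) :
    pRank p B = if p ∣ k then p ^ m else p ^ m + 1 := by
  classical
  have : Fact p.Prime := ⟨hp⟩
  have : Fintype (ℙ F (Fin 2 → F)) := Fintype.ofFinite _
  exact pRank_eq_of_isPGroup (translations F) (isPGroup_translations hF)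
    (x₀ := OnePoint.equivProjectivization F OnePoint.infty)
    (fun _ _ => exists_translation_smul_eq)
    (by rw [card_projectiveLine, hF]) (dvd_pow_self p (by omega)) hinv hne hcard hk1 hk2
end
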